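/- arXiv:2502.18109 — 5 statements merged into one kernel-verified Lean document; each statement's English description precedes it below -/
import Mathlib

section
/- Let a, b ∈ 𝔹² be distinct points, let m = d({0}, L[a,b]) be the Euclidean distance from the origin to the line through a and b, and let f : 𝔹² → 𝔹² be a holomorphic (analytic) function. Then tanh(h(f(a), f(b))/4) ≤ (1/√(1−m²)) · tanh(h(a,b)/4), where h is the Hilbert metric of the unit disk. -/
open Complex ComplexConjugate

/-- The line through two points `a`, `b` in the complex plane. -/
noncomputable def lineThrough (a b : ℂ) : Set ℂ :=
  {z : ℂ | ∃ t : ℝ, z = a + (t : ℂ) * (b - a)}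

/-- The Hilbert metric of the unit disk: for `a ≠ b`,
`h(a,b) = log (|u-b||a-v| / (|u-a||b-v|))` where `u, v` are the intersection
points of the line through `a, b` with the unit circle, ordered so that
`|u-a| < |u-b|` (equivalently `|v-b| < |v-a|`). For `a = b` the defining set
is empty and `sSup ∅ = 0`. -/
noncomputable def hilbertDist (a b : ℂ) : ℝ :=
  sSup { d : ℝ | ∃ u v : ℂ, ‖u‖ = 1 ∧ ‖v‖ = 1 ∧
    u ∈ lineThrough a b ∧ v ∈ lineThrough a b ∧
    dist u a < dist u b ∧ dist v b < dist v a ∧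
    d = Real.log ((dist u b * dist a v) / (dist u a * dist b v)) }

/-- The hyperbolic (Poincaré) metric of the unit disk, defined by
`sinh (ρ(a,b)/2) = |a-b| / √((1-|a|²)(1-|b|²))`. -/
noncomputable def rhoDist (a b : ℂ) : ℝ :=
  2 * Real.arsinh (‖a - b‖ /
    Real.sqrt ((1 - ‖a‖ ^ 2) * (1 - ‖b‖ ^ 2)))

/-- The visual angle metric of the unit disk:
`v(a,b) = sup {∠(a,z,b) : z ∈ ∂𝔹²}`. -/
noncomputable def visualAngle (a b : ℂ) : ℝ :=
  sSup { α : ℝ | ∃ z : ℂ, ‖z‖ = 1 ∧ α = EuclideanGeometry.angle a z b }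

/-- Euclidean distance from the origin to the line through `a` and `b`. -/
noncomputable def distToLine (a b : ℂ) : ℝ := Metric.infDist 0 (lineThrough a b)

/-- The Hilbert disk `B_h(z₀, t)`. -/
noncomputable def hilbertBall (z₀ : ℂ) (t : ℝ) : Set ℂ :=
  {z : ℂ | ‖z‖ < 1 ∧ hilbertDist z₀ z < t}

/-- The hyperbolic disk `B_ρ(z₀, t)`. -/
noncomputable def rhoBall (z₀ : ℂ) (t : ℝ) : Set ℂ :=
  {z : ℂ | ‖z‖ < 1 ∧ rhoDist z₀ z < t}

/-!
Write `ρ` for the hyperbolic metric and parametrize the line through `a` and `b` as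
`t ↦ a + t (b - a)`, meeting the unit circle at `t₁ < 0` and `t₂ > 1`. Then `sinh (h(a,b)/2)` and
`sinh (ρ(a,b)/2)` are both explicit in `t₁, t₂`, and their ratio `√(1 - m²)` is half the length of
the chord. Hence `h ≤ ρ`, and the half-angle formula `tanh (x/2) = sinh x / (1 + cosh x)` gives
`tanh (ρ/4) ≤ tanh (h/4) / √(1 - m²)`. With the Schwarz–Pick lemma `ρ(f a, f b) ≤ ρ(a, b)`:
`tanh (h(f a, f b)/4) ≤ tanh (ρ(f a, f b)/4) ≤ tanh (ρ(a, b)/4) ≤ tanh (h(a, b)/4) / √(1 - m²)`.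
-/

open Metric AffineMap

namespace Real

theorem tanh_monotone : Monotone tanh := fun x y hxy => by
  rwa [← artanh_le_artanh_iff ⟨neg_one_lt_tanh x, tanh_lt_one x⟩
    ⟨neg_one_lt_tanh y, tanh_lt_one y⟩, artanh_tanh, artanh_tanh]

theorem tanh_half (x : ℝ) : tanh (x / 2) = sinh x / (1 + cosh x) := by
  obtain ⟨y, rfl⟩ : ∃ y, x = 2 * y := ⟨x / 2, by ring⟩
  rw [mul_div_cancel_left₀ _ two_ne_zero, sinh_two_mul, cosh_two_mul, tanh_eq_sinh_div_cosh]
  field_simp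
  linear_combination (-sinh y) * cosh_sq y

theorem sinh_half_log {r : ℝ} (hr : 0 < r) : sinh (log r / 2) = (r - 1) / (2 * √r) := by
  have hexp : exp (log r / 2) = √r := by
    rw [sqrt_eq_rpow, rpow_def_of_pos hr]; ring_nf
  rw [sinh_eq, exp_neg, hexp]
  field_simp
  rw [sq_sqrt hr.le]

theorem tanh_half_le_of_sinh_eq_mul {u v c : ℝ} (hv : 0 ≤ v) (hc : 0 < c) (hc1 : c ≤ 1)
    (h : sinh u = c * sinh v) : tanh (v / 2) ≤ tanh (u / 2) / c := by
  have hsv : 0 ≤ sinh v := sinh_nonneg_iff.2 hv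
  have hu : 0 ≤ u := sinh_nonneg_iff.1 (h ▸ mul_nonneg hc.le hsv)
  have huv : u ≤ v := sinh_le_sinh.1 (by nlinarith)
  have hcosh : cosh u ≤ cosh v := cosh_le_cosh.2 (by rwa [abs_of_nonneg hu, abs_of_nonneg hv])
  have hcu : 0 < 1 + cosh u := by linarith [cosh_pos u]
  rw [tanh_half, tanh_half, h, le_div_iff₀ hc, div_mul_eq_mul_div,
    div_le_div_iff₀ (by linarith) hcu]
  nlinarith [mul_le_mul_of_nonneg_left hcosh hsv]

end Real

section Mobius

noncomputable def mobius (w z : ℂ) : ℂ := (w - z) / (1 - conj w * z)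

theorem sq_norm_one_sub_conj_mul_sub (w z : ℂ) :
    ‖1 - conj w * z‖ ^ 2 - ‖w - z‖ ^ 2 = (1 - ‖w‖ ^ 2) * (1 - ‖z‖ ^ 2) := by
  simp only [Complex.sq_norm, normSq_apply, sub_re, sub_im, mul_re, mul_im, one_re, one_im,
    conj_re, conj_im]
  ring

variable {w z : ℂ}

theorem one_sub_conj_mul_ne_zero (hw : ‖w‖ < 1) (hz : ‖z‖ < 1) : 1 - conj w * z ≠ 0 := by
  intro h
  have : ‖conj w * z‖ = 1 := by rw [← sub_eq_zero.1 h, norm_one]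
  rw [norm_mul, Complex.norm_conj] at this
  nlinarith [norm_nonneg w, norm_nonneg z]

theorem norm_mobius_lt_one (hw : ‖w‖ < 1) (hz : ‖z‖ < 1) : ‖mobius w z‖ < 1 := by
  have hden : 0 < ‖1 - conj w * z‖ := norm_pos_iff.2 (one_sub_conj_mul_ne_zero hw hz)
  have hid := sq_norm_one_sub_conj_mul_sub w z
  have hprod : 0 < (1 - ‖w‖ ^ 2) * (1 - ‖z‖ ^ 2) := by
    apply mul_pos <;> nlinarith [norm_nonneg w, norm_nonneg z]
  rw [mobius, norm_div, div_lt_one hden]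
  nlinarith [norm_nonneg (w - z)]

theorem mobius_self (w : ℂ) : mobius w w = 0 := by simp [mobius]

theorem mobius_zero (w : ℂ) : mobius w 0 = w := by simp [mobius]

theorem mobius_mobius (hw : ‖w‖ < 1) (hz : ‖z‖ < 1) : mobius w (mobius w z) = z := by
  have hz' : 1 - conj w * z ≠ 0 := one_sub_conj_mul_ne_zero hw hz
  have hw' : 1 - conj w * w ≠ 0 := one_sub_conj_mul_ne_zero hw hw
  have hden : 1 - conj w * mobius w z ≠ 0 := by
    rw [mobius, mul_div_assoc', one_sub_div hz']
    refine div_ne_zero ?_ hz'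
    convert hw' using 1; ring
  have hz'' : 1 - z * conj w ≠ 0 := by rwa [mul_comm]
  rw [mobius, div_eq_iff hden, mobius]
  field_simp
  ring

theorem differentiableOn_mobius (hw : ‖w‖ < 1) : DifferentiableOn ℂ (mobius w) (ball 0 1) :=
  ((differentiableOn_const w).sub differentiableOn_id).div
    ((differentiableOn_const 1).sub ((differentiableOn_const _).mul differentiableOn_id))
    fun _ hz => one_sub_conj_mul_ne_zero hw (mem_ball_zero_iff.1 hz)

theorem mapsTo_mobius (hw : ‖w‖ < 1) : Set.MapsTo (mobius w) (ball 0 1) (ball 0 1) :=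
  fun _ hz => mem_ball_zero_iff.2 (norm_mobius_lt_one hw (mem_ball_zero_iff.1 hz))

/-- The Schwarz–Pick lemma, from the Schwarz lemma applied to `mobius (f a) ∘ f ∘ mobius a`. -/
theorem norm_mobius_le_of_mapsTo {f : ℂ → ℂ} (hf : DifferentiableOn ℂ f (ball 0 1))
    (hmaps : Set.MapsTo f (ball 0 1) (ball 0 1)) {a b : ℂ} (ha : ‖a‖ < 1) (hb : ‖b‖ < 1) :
    ‖mobius (f a) (f b)‖ ≤ ‖mobius a b‖ := by
  have hfa : ‖f a‖ < 1 := mem_ball_zero_iff.1 (hmaps (mem_ball_zero_iff.2 ha))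
  have hg := Complex.norm_le_norm_of_mapsTo_ball
    ((differentiableOn_mobius hfa).comp (hf.comp (differentiableOn_mobius ha) (mapsTo_mobius ha))
      (hmaps.comp (mapsTo_mobius ha)))
    (((mapsTo_mobius hfa).comp (hmaps.comp (mapsTo_mobius ha))).mono_right ball_subset_closedBall)
    (by simp [mobius_zero, mobius_self]) (norm_mobius_lt_one ha hb)
  simpa [mobius_mobius ha hb] using hg

end Mobius

theorem rhoDist_eq_two_mul_artanh {u v : ℂ} (hu : ‖u‖ < 1) (hv : ‖v‖ < 1) :
    rhoDist u v = 2 * Real.artanh ‖mobius u v‖ := by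
  set δ := ‖mobius u v‖ with hδdef
  have hδ : δ ∈ Set.Ioo (-1) 1 := ⟨by linarith [norm_nonneg (mobius u v)], norm_mobius_lt_one hu hv⟩
  have hden : 0 < ‖1 - conj u * v‖ := norm_pos_iff.2 (one_sub_conj_mul_ne_zero hu hv)
  have hprod : (1 - ‖u‖ ^ 2) * (1 - ‖v‖ ^ 2) = ‖1 - conj u * v‖ ^ 2 * (1 - δ ^ 2) := by
    rw [← sq_norm_one_sub_conj_mul_sub, hδdef, mobius, norm_div, div_pow]
    field_simp
  have hquot : ‖u - v‖ / ‖1 - conj u * v‖ = δ := (norm_div _ _).symm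
  rw [rhoDist, hprod, Real.sqrt_mul (sq_nonneg _), Real.sqrt_sq hden.le, ← div_div, hquot,
    ← Real.sinh_artanh hδ, Real.arsinh_sinh]

theorem rhoDist_le_of_mapsTo {f : ℂ → ℂ} (hf : DifferentiableOn ℂ f (ball 0 1))
    (hmaps : Set.MapsTo f (ball 0 1) (ball 0 1)) {a b : ℂ} (ha : ‖a‖ < 1) (hb : ‖b‖ < 1) :
    rhoDist (f a) (f b) ≤ rhoDist a b := by
  have hfa : ‖f a‖ < 1 := mem_ball_zero_iff.1 (hmaps (mem_ball_zero_iff.2 ha))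
  have hfb : ‖f b‖ < 1 := mem_ball_zero_iff.1 (hmaps (mem_ball_zero_iff.2 hb))
  rw [rhoDist_eq_two_mul_artanh hfa hfb, rhoDist_eq_two_mul_artanh ha hb]
  gcongr
  exact Real.artanh_le_artanh (by linarith [norm_nonneg (mobius (f a) (f b))])
    (norm_mobius_lt_one ha hb) (norm_mobius_le_of_mapsTo hf hmaps ha hb)

theorem exists_quadratic_eq_mul_of_neg {c₂ c₁ c₀ : ℝ} (h₂ : 0 < c₂) (h₀ : c₀ < 0)
    (h₁ : c₂ + c₁ + c₀ < 0) :
    ∃ t₁ t₂ : ℝ, t₁ < 0 ∧ 1 < t₂ ∧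
      ∀ t : ℝ, c₂ * t ^ 2 + c₁ * t + c₀ = c₂ * ((t - t₁) * (t - t₂)) := by
  set s := √(c₁ ^ 2 - 4 * c₂ * c₀)
  have hs : s ^ 2 = c₁ ^ 2 - 4 * c₂ * c₀ := Real.sq_sqrt (by nlinarith [sq_nonneg c₁])
  have hs₀ : 0 ≤ s := Real.sqrt_nonneg _
  refine ⟨(-c₁ - s) / (2 * c₂), (-c₁ + s) / (2 * c₂), ?_, ?_, fun t => ?_⟩
  · exact div_neg_of_neg_of_pos (by nlinarith) (by positivity)
  · rw [one_lt_div (by positivity)]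
    nlinarith
  · field_simp
    linear_combination hs

section Chord

variable {E : Type*} [NormedAddCommGroup E] [InnerProductSpace ℝ E]

theorem sq_norm_lineMap (a b : E) (t : ℝ) :
    ‖lineMap a b t‖ ^ 2 = ‖b - a‖ ^ 2 * t ^ 2 + 2 * inner ℝ a (b - a) * t + ‖a‖ ^ 2 := by
  rw [lineMap_apply_module', add_comm, norm_add_sq_real, norm_smul, inner_smul_right, mul_pow,
    Real.norm_eq_abs, sq_abs]
  ring

/-- `t₁ < 0` and `t₂ > 1` are the parameters at which the line `t ↦ lineMap a b t` crosses the
unit sphere. -/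
structure ChordParams (a b : E) (t₁ t₂ : ℝ) : Prop where
  neg : t₁ < 0
  one_lt : 1 < t₂
  sq_norm_sub_one : ∀ t : ℝ, ‖lineMap a b t‖ ^ 2 - 1 = ‖b - a‖ ^ 2 * ((t - t₁) * (t - t₂))

theorem exists_chordParams {a b : E} (ha : ‖a‖ < 1) (hb : ‖b‖ < 1) (hab : a ≠ b) :
    ∃ t₁ t₂ : ℝ, ChordParams a b t₁ t₂ := by
  have hb' := sq_norm_lineMap a b 1
  rw [lineMap_apply_one] at hb'
  obtain ⟨t₁, t₂, ht₁, ht₂, hfac⟩ :=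
    exists_quadratic_eq_mul_of_neg (c₁ := 2 * inner ℝ a (b - a)) (c₀ := ‖a‖ ^ 2 - 1)
    (pow_pos (norm_pos_iff.2 (sub_ne_zero.2 hab.symm)) 2)
    (by nlinarith [norm_nonneg a]) (by nlinarith [norm_nonneg b])
  exact ⟨t₁, t₂, ht₁, ht₂, fun t => by rw [sq_norm_lineMap, ← hfac]; ring⟩

namespace ChordParams

variable {a b : E} {t₁ t₂ : ℝ}

theorem norm_lineMap_eq_one_iff (h : ChordParams a b t₁ t₂) (hab : a ≠ b) {t : ℝ} :
    ‖lineMap a b t‖ = 1 ↔ t = t₁ ∨ t = t₂ := by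
  have hD : ‖b - a‖ ^ 2 ≠ 0 := pow_ne_zero 2 (norm_ne_zero_iff.2 (sub_ne_zero.2 hab.symm))
  rw [← pow_eq_one_iff_of_nonneg (norm_nonneg _) two_ne_zero, ← sub_eq_zero, h.sq_norm_sub_one,
    mul_eq_zero_iff_left hD, mul_eq_zero, sub_eq_zero, sub_eq_zero]

theorem one_sub_sq_norm_left (h : ChordParams a b t₁ t₂) :
    1 - ‖a‖ ^ 2 = -t₁ * t₂ * ‖b - a‖ ^ 2 := by
  have h0 := h.sq_norm_sub_one 0
  rw [lineMap_apply_zero] at h0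
  linear_combination -h0

theorem one_sub_sq_norm_right (h : ChordParams a b t₁ t₂) :
    1 - ‖b‖ ^ 2 = (1 - t₁) * (t₂ - 1) * ‖b - a‖ ^ 2 := by
  have h1 := h.sq_norm_sub_one 1
  rw [lineMap_apply_one] at h1
  linear_combination -h1

theorem norm_lineMap_midpoint_le (h : ChordParams a b t₁ t₂) (t : ℝ) :
    ‖lineMap a b ((t₁ + t₂) / 2)‖ ≤ ‖lineMap a b t‖ := by
  have hm := h.sq_norm_sub_one ((t₁ + t₂) / 2)
  have ht := h.sq_norm_sub_one t
  refine (pow_le_pow_iff_left₀ (norm_nonneg _) (norm_nonneg _) two_ne_zero).1 ?_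
  nlinarith [mul_nonneg (sq_nonneg ‖b - a‖) (sq_nonneg (t - (t₁ + t₂) / 2))]

theorem sq_norm_lineMap_midpoint (h : ChordParams a b t₁ t₂) :
    ‖lineMap a b ((t₁ + t₂) / 2)‖ ^ 2 = 1 - ((t₂ - t₁) * ‖b - a‖ / 2) ^ 2 := by
  linear_combination h.sq_norm_sub_one ((t₁ + t₂) / 2)

end ChordParams

end Chord

theorem lineThrough_eq_range (a b : ℂ) : lineThrough a b = Set.range (lineMap a b : ℝ → ℂ) := by
  ext z
  simp [lineThrough, lineMap_apply_module', Complex.real_smul, eq_comm, add_comm]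

theorem hilbertDist_self (a : ℂ) : hilbertDist a a = 0 := by
  simp [hilbertDist]

theorem rhoDist_nonneg (a b : ℂ) : 0 ≤ rhoDist a b :=
  mul_nonneg zero_le_two (Real.arsinh_nonneg_iff.2 (by positivity))

theorem distToLine_lt_one {a : ℂ} (ha : ‖a‖ < 1) (b : ℂ) : distToLine a b < 1 :=
  (infDist_le_dist_of_mem (show a ∈ lineThrough a b from ⟨0, by simp⟩)).trans_lt
    (by simpa using ha)

namespace ChordParams

variable {a b : ℂ} {t₁ t₂ : ℝ}

theorem hilbertDist_eq (h : ChordParams a b t₁ t₂) (hab : a ≠ b) :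
    hilbertDist a b = Real.log (((1 - t₁) * t₂) / (-t₁ * (t₂ - 1))) := by
  have ht₁ := h.neg
  have ht₂ := h.one_lt
  have hd : 0 < dist a b := dist_pos.2 hab
  set P₁ := lineMap a b t₁
  set P₂ := lineMap a b t₂
  have hP₁a : dist P₁ a = -t₁ * dist a b := by
    rw [dist_lineMap_left, Real.norm_eq_abs, abs_of_neg ht₁]
  have hP₁b : dist P₁ b = (1 - t₁) * dist a b := by
    rw [dist_lineMap_right, Real.norm_eq_abs, abs_of_pos (by linarith)]
  have hP₂a : dist P₂ a = t₂ * dist a b := by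
    rw [dist_lineMap_left, Real.norm_eq_abs, abs_of_pos (by linarith)]
  have hP₂b : dist P₂ b = (t₂ - 1) * dist a b := by
    rw [dist_lineMap_right, Real.norm_eq_abs, abs_of_neg (by linarith), neg_sub]
  have hon : ∀ z ∈ lineThrough a b, ‖z‖ = 1 → z = P₁ ∨ z = P₂ := by
    rw [lineThrough_eq_range]
    rintro _ ⟨t, rfl⟩ hz
    rcases (h.norm_lineMap_eq_one_iff hab).1 hz with rfl | rfl <;> simp [P₁, P₂]
  have hmem : ∀ t : ℝ, lineMap a b t ∈ lineThrough a b := fun t => by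
    rw [lineThrough_eq_range]; exact ⟨t, rfl⟩
  have hval : Real.log ((dist P₁ b * dist a P₂) / (dist P₁ a * dist b P₂)) =
      Real.log (((1 - t₁) * t₂) / (-t₁ * (t₂ - 1))) := by
    rw [dist_comm a, dist_comm b, hP₁a, hP₁b, hP₂a, hP₂b, mul_mul_mul_comm,
      mul_mul_mul_comm (-t₁), mul_div_mul_right _ _ (by positivity)]
  rw [hilbertDist, ← csSup_singleton (Real.log (((1 - t₁) * t₂) / (-t₁ * (t₂ - 1))))]
  congr 1
  ext d
  constructor
  · rintro ⟨u, v, hu, hv, hul, hvl, hua, hvb, rfl⟩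
    obtain rfl : u = P₁ := (hon u hul hu).resolve_right <| by
      rintro rfl; rw [hP₂a, hP₂b] at hua; nlinarith
    obtain rfl : v = P₂ := (hon v hvl hv).resolve_left <| by
      rintro rfl; rw [hP₁a, hP₁b] at hvb; nlinarith
    exact hval
  · rintro rfl
    refine ⟨P₁, P₂, (h.norm_lineMap_eq_one_iff hab).2 (.inl rfl),
      (h.norm_lineMap_eq_one_iff hab).2 (.inr rfl), hmem t₁, hmem t₂, ?_, ?_, hval.symm⟩
    · rw [hP₁a, hP₁b]; nlinarith
    · rw [hP₂a, hP₂b]; nlinarith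

theorem distToLine_eq (h : ChordParams a b t₁ t₂) :
    distToLine a b = ‖lineMap a b ((t₁ + t₂) / 2)‖ := by
  rw [distToLine, lineThrough_eq_range]
  refine le_antisymm
    ((infDist_le_dist_of_mem (Set.mem_range_self _)).trans_eq (dist_zero_left _)) ?_
  rw [le_infDist (Set.range_nonempty _)]
  rintro _ ⟨t, rfl⟩
  rw [dist_zero_left]
  exact h.norm_lineMap_midpoint_le t

theorem sqrt_one_sub_distToLine_sq (h : ChordParams a b t₁ t₂) :
    √(1 - distToLine a b ^ 2) = (t₂ - t₁) * ‖b - a‖ / 2 := by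
  have := h.neg
  have := h.one_lt
  rw [h.distToLine_eq, h.sq_norm_lineMap_midpoint, sub_sub_cancel,
    Real.sqrt_sq (div_nonneg (mul_nonneg (by linarith) (norm_nonneg _)) zero_le_two)]

theorem sinh_half_hilbertDist (h : ChordParams a b t₁ t₂) (hab : a ≠ b) :
    Real.sinh (hilbertDist a b / 2) = √(1 - distToLine a b ^ 2) * Real.sinh (rhoDist a b / 2) := by
  have ht₁ := h.neg
  have ht₂ := h.one_lt
  have hD : 0 < ‖b - a‖ := norm_pos_iff.2 (sub_ne_zero.2 hab.symm)
  set X := (1 - t₁) * t₂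
  set Y := -t₁ * (t₂ - 1)
  have hX : 0 < X := mul_pos (by linarith) (by linarith)
  have hY : 0 < Y := mul_pos (by linarith) (by linarith)
  have hprod : (1 - ‖a‖ ^ 2) * (1 - ‖b‖ ^ 2) = X * Y * (‖b - a‖ ^ 2) ^ 2 := by
    rw [h.one_sub_sq_norm_left, h.one_sub_sq_norm_right]; ring
  rw [h.hilbertDist_eq hab, Real.sinh_half_log (div_pos hX hY), h.sqrt_one_sub_distToLine_sq,
    rhoDist, mul_div_cancel_left₀ _ two_ne_zero, Real.sinh_arsinh, hprod,
    Real.sqrt_mul (by positivity), Real.sqrt_sq (by positivity), Real.sqrt_div hX.le,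
    Real.sqrt_mul hX.le, norm_sub_rev a b]
  field_simp
  rw [Real.sq_sqrt hY.le]
  ring

end ChordParams

theorem sqrt_one_sub_distToLine_sq_pos {a : ℂ} (ha : ‖a‖ < 1) (b : ℂ) :
    0 < √(1 - distToLine a b ^ 2) := by
  have h₁ := distToLine_lt_one ha b
  have h₀ : 0 ≤ distToLine a b := infDist_nonneg
  exact Real.sqrt_pos.2 (by nlinarith)

theorem sqrt_one_sub_distToLine_sq_le_one (a b : ℂ) : √(1 - distToLine a b ^ 2) ≤ 1 :=
  Real.sqrt_le_one.2 (by linarith [sq_nonneg (distToLine a b)])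

theorem hilbertDist_le_rhoDist {a b : ℂ} (ha : ‖a‖ < 1) (hb : ‖b‖ < 1) :
    hilbertDist a b ≤ rhoDist a b := by
  rcases eq_or_ne a b with rfl | hab
  · rw [hilbertDist_self]; exact rhoDist_nonneg a a
  obtain ⟨t₁, t₂, h⟩ := exists_chordParams ha hb hab
  have hρ : 0 ≤ Real.sinh (rhoDist a b / 2) :=
    Real.sinh_nonneg_iff.2 (by linarith [rhoDist_nonneg a b])
  have : Real.sinh (hilbertDist a b / 2) ≤ Real.sinh (rhoDist a b / 2) := by
    rw [h.sinh_half_hilbertDist hab]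
    exact mul_le_of_le_one_left hρ (sqrt_one_sub_distToLine_sq_le_one a b)
  linarith [Real.sinh_le_sinh.1 this]

theorem tanh_rhoDist_le {a b : ℂ} (ha : ‖a‖ < 1) (hb : ‖b‖ < 1) (hab : a ≠ b) :
    Real.tanh (rhoDist a b / 4) ≤
      1 / √(1 - distToLine a b ^ 2) * Real.tanh (hilbertDist a b / 4) := by
  obtain ⟨t₁, t₂, h⟩ := exists_chordParams ha hb hab
  have key := Real.tanh_half_le_of_sinh_eq_mul (by linarith [rhoDist_nonneg a b])
    (sqrt_one_sub_distToLine_sq_pos ha b) (sqrt_one_sub_distToLine_sq_le_one a b)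
    (h.sinh_half_hilbertDist hab)
  rw [div_div, div_div, show (2 : ℝ) * 2 = 4 by norm_num] at key
  rwa [one_div_mul_eq_div]

/-- Distortion of the Hilbert metric under a holomorphic self-map of the unit disk:
`tanh (h(f a, f b)/4) ≤ (1/√(1-m²)) · tanh (h(a,b)/4)` with `m = d({0}, L[a,b])`. -/
theorem hilbert_distortion_analytic (a b : ℂ)
    (ha : ‖a‖ < 1) (hb : ‖b‖ < 1) (hab : a ≠ b)
    (f : ℂ → ℂ) (hf : DifferentiableOn ℂ f (Metric.ball 0 1))
    (hmaps : Set.MapsTo f (Metric.ball 0 1) (Metric.ball 0 1)) :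
    Real.tanh (hilbertDist (f a) (f b) / 4) ≤
      (1 / Real.sqrt (1 - distToLine a b ^ 2)) * Real.tanh (hilbertDist a b / 4) := by
  have hfa : ‖f a‖ < 1 := mem_ball_zero_iff.1 (hmaps (mem_ball_zero_iff.2 ha))
  have hfb : ‖f b‖ < 1 := mem_ball_zero_iff.1 (hmaps (mem_ball_zero_iff.2 hb))
  calc Real.tanh (hilbertDist (f a) (f b) / 4)
      ≤ Real.tanh (rhoDist (f a) (f b) / 4) :=
        Real.tanh_monotone (by linarith [hilbertDist_le_rhoDist hfa hfb])
    _ ≤ Real.tanh (rhoDist a b / 4) :=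
        Real.tanh_monotone (by linarith [rhoDist_le_of_mapsTo hf hmaps ha hb])
    _ ≤ _ := tanh_rhoDist_le ha hb hab
end

section
/- Let a, b, c, d be four distinct points on the unit circle ∂𝔹², lying on ∂𝔹² in this circular order, such that the lines L[a,b] and L[c,d] are not parallel. Let p be a point on the open Euclidean segment (b,c), let g = LIS[a,b,c,d], j = LIS[g,p,a,c], k = LIS[g,p,b,d], and l = LIS[g,p,a,d], where each of these pairs of lines intersects in a single point, and assume p, j, k, l ∈ 𝔹². Then ρ(p,j) = ρ(k,l) and ρ(p,k) = ρ(j,l), where ρ is the hyperbolic metric of the unit disk. -/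
open Complex ComplexConjugate

/-!
Write `w = p - g`, so that `L[g,p]` is `t ↦ g + t w` with `p` at `t = 1`. Since `g` lies on the
chords `ab` and `cd`, the harmonic homology with centre `g` and axis the polar of `g`, which
preserves the unit circle, swaps `a ↔ b` and `c ↔ d`; hence it swaps the chords `ac ↔ bd` and
`ad ↔ bc`, and on `L[g,p]` the points `j ↔ k` and `p ↔ l`. In the parameter `t` it is a Möbius
involution fixing `t = 0`, and such an involution preserves
`(s - t)² / ((1 - |g + s w|²)(1 - |g + t w|²))`, which is `sinh² (ρ/2)` of the two points.
-/

lemma lineThrough_comm (u v : ℂ) : lineThrough u v = lineThrough v u := by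
  suffices ∀ u v : ℂ, lineThrough u v ⊆ lineThrough v u from (this u v).antisymm (this v u)
  rintro u v _ ⟨t, rfl⟩
  exact ⟨1 - t, by push_cast; ring⟩

lemma openSegment_subset_lineThrough (u v : ℂ) : openSegment ℝ u v ⊆ lineThrough u v := by
  rw [openSegment_eq_image_lineMap]
  rintro _ ⟨t, -, rfl⟩
  exact ⟨t, by simp [AffineMap.lineMap_apply, add_comm]⟩

lemma exp_mul_I_ne_of_lt {s t : ℝ} (hst : s < t) (hts : t < s + 2 * Real.pi) :
    cexp (s * I) ≠ cexp (t * I) := fun h ↦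
  hst.ne (Circle.exp_injOn_Ico (b := s + 2 * Real.pi) (by linarith) ⟨le_rfl, by linarith⟩
    ⟨hst.le, hts⟩ (Circle.ext h))

/-- For `‖u‖ = ‖v‖ = 1`, this vanishes exactly when `z` lies on the line through `u` and `v`. -/
def chordDefect (u v z : ℂ) : ℂ := u + v - z - u * v * conj z

lemma chordDefect_comm (u v z : ℂ) : chordDefect u v z = chordDefect v u z := by
  unfold chordDefect; ring

lemma chordDefect_eq_zero {u v z : ℂ} (hu : ‖u‖ = 1) (hv : ‖v‖ = 1) (hz : z ∈ lineThrough u v) :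
    chordDefect u v z = 0 := by
  have hu' : u * conj u = 1 := by simp [mul_conj', hu]
  have hv' : v * conj v = 1 := by simp [mul_conj', hv]
  obtain ⟨t, rfl⟩ := hz
  simp only [chordDefect, map_add, map_mul, map_sub, conj_ofReal]
  linear_combination (t - 1) * v * hu' - t * u * hv'

lemma mul_eq_chordDefect {u v g w : ℂ} {t : ℝ} (hu : ‖u‖ = 1) (hv : ‖v‖ = 1)
    (h : g + t * w ∈ lineThrough u v) : t * (w + u * v * conj w) = chordDefect u v g := by
  have := chordDefect_eq_zero hu hv h
  simp only [chordDefect, map_add, map_mul, conj_ofReal] at this ⊢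
  linear_combination -this

lemma eq_of_chordDefect_eq_zero {u v v' g : ℂ} (hv : v ≠ v')
    (h : chordDefect u v g = 0) (h' : chordDefect u v' g = 0) : g = u := by
  unfold chordDefect at h h'
  have hug : u * conj g = 1 := sub_eq_zero.1 <|
    (mul_eq_zero.1 (by linear_combination h' - h : (v - v') * (u * conj g - 1) = 0)).resolve_left
      (sub_ne_zero.2 hv)
  linear_combination -h - v * hug

lemma normSq_ne_one_of_chordDefect_eq_zero {a b c d g : ℂ} (hac : a ≠ c) (had : a ≠ d) (hbc : b ≠ c)
    (hbd : b ≠ d) (hab : chordDefect a b g = 0) (hcd : chordDefect c d g = 0) : normSq g ≠ 1 := by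
  intro hg
  have hg' : g * conj g = 1 := by rw [mul_conj, hg, ofReal_one]
  unfold chordDefect at hab hcd
  have h₁ : (g - a) * (g - b) = 0 := by linear_combination -g * hab - a * b * hg'
  have h₂ : (g - c) * (g - d) = 0 := by linear_combination -g * hcd - c * d * hg'
  rcases mul_eq_zero.1 h₁ with h₁ | h₁ <;> rcases mul_eq_zero.1 h₂ with h₂ | h₂
  · exact hac (by linear_combination h₂ - h₁)
  · exact had (by linear_combination h₂ - h₁)
  · exact hbc (by linear_combination h₂ - h₁)
  · exact hbd (by linear_combination h₂ - h₁)

lemma chordDefect_ne_zero {u v v' g : ℂ} (hu : ‖u‖ = 1) (hv : v ≠ v') (hg : normSq g ≠ 1)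
    (h : chordDefect u v g = 0) : chordDefect u v' g ≠ 0 := fun h' ↦
  hg (by rw [eq_of_chordDefect_eq_zero hv h h', normSq_eq_norm_sq, hu, one_pow])

lemma mul_ne_mul_of_chordDefect_eq_zero {a b c d g : ℂ} (hac : a ≠ c) (hbc : b ≠ c)
    (hab : chordDefect a b g = 0) (hcd : chordDefect c d g = 0) : a * b ≠ c * d := by
  intro h
  unfold chordDefect at hab hcd
  have : (c - a) * (c - b) = 0 := by linear_combination -c * (hab - hcd + conj g * h) + h
  rcases mul_eq_zero.1 this with h' | h'
  · exact hac (sub_eq_zero.1 h').symm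
  · exact hbc (sub_eq_zero.1 h').symm

lemma chordDefect_pencil {a b c d g : ℂ} (hD : a * b ≠ c * d)
    (hab : chordDefect a b g = 0) (hcd : chordDefect c d g = 0) :
    (1 - g * conj g) * (chordDefect a c g + chordDefect b d g) =
        conj g * chordDefect a c g * chordDefect b d g ∧
      (1 - g * conj g) * (b * d * chordDefect a c g + a * c * chordDefect b d g) =
        g * chordDefect a c g * chordDefect b d g := by
  unfold chordDefect at *
  -- treat `g` and `conj g` as independent unknowns of the two chord equations
  have hD' : a * b - c * d ≠ 0 := sub_ne_zero.2 hD
  have hg' : conj g = (a + b - c - d) / (a * b - c * d) := by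
    rw [eq_div_iff hD']; linear_combination hcd - hab
  have hg : g = (a * b * (c + d) - c * d * (a + b)) / (a * b - c * d) := by
    rw [eq_div_iff hD']; linear_combination c * d * hab - a * b * hcd
  rw [hg', hg]
  constructor <;> field_simp <;> ring

/-- `g + s w` and `g + t w` are exchanged by the harmonic homology with centre `g` and axis the
polar of `g` with respect to the unit circle. -/
def HomologyPair (g w : ℂ) (s t : ℝ) : Prop :=
  2 * (g * conj w).re * (s * t) + (normSq g - 1) * (s + t) = 0

lemma HomologyPair.symm {g w : ℂ} {s t : ℝ} (h : HomologyPair g w s t) : HomologyPair g w t s := by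
  unfold HomologyPair at *; linear_combination h

lemma homologyPair_of_mem_lineThrough {a b c d g w : ℂ} {s t : ℝ} (ha : ‖a‖ = 1) (hb : ‖b‖ = 1)
    (hc : ‖c‖ = 1) (hd : ‖d‖ = 1) (hac : a ≠ c) (had : a ≠ d) (hbc : b ≠ c) (hg : normSq g ≠ 1)
    (hgab : g ∈ lineThrough a b) (hgcd : g ∈ lineThrough c d)
    (hs : g + s * w ∈ lineThrough a c) (ht : g + t * w ∈ lineThrough b d) :
    HomologyPair g w s t := by
  have hab := chordDefect_eq_zero ha hb hgab
  have hcd := chordDefect_eq_zero hc hd hgcd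
  have hs' := mul_eq_chordDefect ha hc hs
  have ht' := mul_eq_chordDefect hb hd ht
  have hN₁ : chordDefect a c g ≠ 0 := chordDefect_ne_zero ha hbc hg hab
  have hN₂ : chordDefect b d g ≠ 0 :=
    chordDefect_ne_zero hb had hg (by rwa [chordDefect_comm])
  have hD₁ : w + a * c * conj w ≠ 0 := right_ne_zero_of_mul (hs' ▸ hN₁)
  have hD₂ : w + b * d * conj w ≠ 0 := right_ne_zero_of_mul (ht' ▸ hN₂)
  obtain ⟨h₁, h₂⟩ := chordDefect_pencil (mul_ne_mul_of_chordDefect_eq_zero hac hbc hab hcd) hab hcd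
  have hB : ((2 * (g * conj w).re : ℝ) : ℂ) = g * conj w + conj g * w := by
    rw [← add_conj, map_mul, conj_conj, mul_comm (conj g)]
  have hC : ((normSq g - 1 : ℝ) : ℂ) = g * conj g - 1 := by rw [ofReal_sub, ← mul_conj, ofReal_one]
  have : ((2 * (g * conj w).re * (s * t) + (normSq g - 1) * (s + t) : ℝ) : ℂ) *
      ((w + a * c * conj w) * (w + b * d * conj w)) = 0 := by
    push_cast [hB, hC]
    linear_combination
      (g * conj w + conj g * w) * (t * (w + b * d * conj w) * hs' + chordDefect a c g * ht') +
        (g * conj g - 1) * ((w + b * d * conj w) * hs' + (w + a * c * conj w) * ht') -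
        w * h₁ - conj w * h₂
  exact_mod_cast (mul_eq_zero.1 this).resolve_right (mul_ne_zero hD₁ hD₂)

lemma add_ne_zero_and_eq_div_of_involution {K : Type*} [Field K] {B C x y : K} (hC : C ≠ 0)
    (h : B * (x * y) + C * (x + y) = 0) : x * B + C ≠ 0 ∧ y = -(C * x) / (x * B + C) := by
  have hx : x * B + C ≠ 0 := by
    intro h₀
    have : C * x = 0 := by linear_combination h - y * h₀
    exact hC (by simpa [(mul_eq_zero.1 this).resolve_left hC] using h₀)
  exact ⟨hx, by rw [eq_div_iff hx]; linear_combination h⟩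

lemma sq_sub_mul_eq_of_involution {K : Type*} [Field K] {A B C x y z u : K} (hC : C ≠ 0)
    (hxy : B * (x * y) + C * (x + y) = 0) (hzu : B * (z * u) + C * (z + u) = 0) :
    (x - z) ^ 2 * ((A * y ^ 2 + B * y + C) * (A * u ^ 2 + B * u + C)) =
      (y - u) ^ 2 * ((A * x ^ 2 + B * x + C) * (A * z ^ 2 + B * z + C)) := by
  obtain ⟨hx, rfl⟩ := add_ne_zero_and_eq_div_of_involution hC hxy
  obtain ⟨hz, rfl⟩ := add_ne_zero_and_eq_div_of_involution hC hzu
  field_simp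
  ring

lemma rhoDist_comm (x y : ℂ) : rhoDist x y = rhoDist y x := by
  rw [rhoDist, rhoDist, norm_sub_rev, mul_comm (1 - ‖x‖ ^ 2)]

lemma rhoDist_eq_rhoDist {x y z u : ℂ} (hx : ‖x‖ < 1) (hy : ‖y‖ < 1) (hz : ‖z‖ < 1) (hu : ‖u‖ < 1)
    (h : ‖x - y‖ ^ 2 * ((1 - ‖z‖ ^ 2) * (1 - ‖u‖ ^ 2)) =
      ‖z - u‖ ^ 2 * ((1 - ‖x‖ ^ 2) * (1 - ‖y‖ ^ 2))) :
    rhoDist x y = rhoDist z u := by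
  have pos {v : ℂ} (hv : ‖v‖ < 1) : 0 < 1 - ‖v‖ ^ 2 := by nlinarith [norm_nonneg v]
  have hxy := mul_pos (pos hx) (pos hy)
  have hzu := mul_pos (pos hz) (pos hu)
  rw [rhoDist, rhoDist]
  congr 2
  rw [← sq_eq_sq₀ (by positivity) (by positivity), div_pow, div_pow,
    Real.sq_sqrt hxy.le, Real.sq_sqrt hzu.le, div_eq_div_iff hxy.ne' hzu.ne']
  linear_combination h

lemma one_sub_norm_add_mul_sq (g w : ℂ) (t : ℝ) :
    1 - ‖g + t * w‖ ^ 2 = -(normSq w * t ^ 2 + 2 * (g * conj w).re * t + (normSq g - 1)) := by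
  simp only [Complex.sq_norm, normSq_apply, add_re, add_im, mul_re, mul_im, ofReal_re, ofReal_im,
    conj_re, conj_im]
  ring

lemma norm_add_mul_sub_add_mul_sq (g w : ℂ) (s t : ℝ) :
    ‖g + s * w - (g + t * w)‖ ^ 2 = (s - t) ^ 2 * normSq w := by
  rw [show g + s * w - (g + t * w) = ((s - t : ℝ) : ℂ) * w by push_cast; ring, Complex.sq_norm,
    normSq_mul, normSq_ofReal, sq]

lemma rhoDist_eq_of_homologyPair {g w : ℂ} {s t s' t' : ℝ} (hg : normSq g ≠ 1)
    (hs : HomologyPair g w s s') (ht : HomologyPair g w t t') (h₁ : ‖g + s * w‖ < 1)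
    (h₂ : ‖g + t * w‖ < 1) (h₃ : ‖g + s' * w‖ < 1) (h₄ : ‖g + t' * w‖ < 1) :
    rhoDist (g + s * w) (g + t * w) = rhoDist (g + s' * w) (g + t' * w) := by
  apply rhoDist_eq_rhoDist h₁ h₂ h₃ h₄
  simp only [norm_add_mul_sub_add_mul_sq, one_sub_norm_add_mul_sq]
  linear_combination normSq w *
    sq_sub_mul_eq_of_involution (A := normSq w) (sub_ne_zero.2 hg) hs ht

theorem rho_equalities_of_config_general (a b c d g p j k l : ℂ)
    (hcirc : ∃ ta tb tc td : ℝ,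
      ta < tb ∧ tb < tc ∧ tc < td ∧ td < ta + 2 * Real.pi ∧
      a = Complex.exp (ta * Complex.I) ∧ b = Complex.exp (tb * Complex.I) ∧
      c = Complex.exp (tc * Complex.I) ∧ d = Complex.exp (td * Complex.I))
    (hp : p ∈ openSegment ℝ b c)
    (hg : lineThrough a b ∩ lineThrough c d = {g})
    (hj : lineThrough g p ∩ lineThrough a c = {j})
    (hk : lineThrough g p ∩ lineThrough b d = {k})
    (hl : lineThrough g p ∩ lineThrough a d = {l})
    (hpD : ‖p‖ < 1) (hjD : ‖j‖ < 1)
    (hkD : ‖k‖ < 1) (hlD : ‖l‖ < 1) :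
    rhoDist p j = rhoDist k l ∧ rhoDist p k = rhoDist j l := by
  obtain ⟨ta, tb, tc, td, h₁, h₂, h₃, h₄, rfl, rfl, rfl, rfl⟩ := hcirc
  have hac := exp_mul_I_ne_of_lt (h₁.trans h₂) (by linarith)
  have had := exp_mul_I_ne_of_lt (h₁.trans (h₂.trans h₃)) h₄
  have hbc := exp_mul_I_ne_of_lt h₂ (by linarith)
  have hbd := exp_mul_I_ne_of_lt (h₂.trans h₃) (by linarith)
  have hu := norm_exp_ofReal_mul_I
  obtain ⟨hgab, hgcd⟩ : g ∈ lineThrough _ _ ∩ lineThrough _ _ := hg.ge (Set.mem_singleton g)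
  have hgg := normSq_ne_one_of_chordDefect_eq_zero hac had hbc hbd
    (chordDefect_eq_zero (hu _) (hu _) hgab) (chordDefect_eq_zero (hu _) (hu _) hgcd)
  obtain ⟨⟨tj, rfl⟩, hjac⟩ : j ∈ lineThrough g p ∩ lineThrough _ _ := hj.ge (Set.mem_singleton j)
  obtain ⟨⟨tk, rfl⟩, hkbd⟩ : k ∈ lineThrough g p ∩ lineThrough _ _ := hk.ge (Set.mem_singleton k)
  obtain ⟨⟨tl, rfl⟩, hlad⟩ : l ∈ lineThrough g p ∩ lineThrough _ _ := hl.ge (Set.mem_singleton l)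
  have hp₁ : g + ((1 : ℝ) : ℂ) * (p - g) = p := by push_cast; ring
  have hjk := homologyPair_of_mem_lineThrough (hu _) (hu _) (hu _) (hu _) hac had hbc hgg
    hgab hgcd hjac hkbd
  have hlp := homologyPair_of_mem_lineThrough (hu _) (hu _) (hu _) (hu _) had hac hbd hgg
    hgab (by rwa [lineThrough_comm]) hlad
    (by rw [hp₁]; exact openSegment_subset_lineThrough _ _ hp)
  rw [← hp₁] at hpD
  constructor
  · rw [rhoDist_comm (g + tk * _),
      ← rhoDist_eq_of_homologyPair hgg hlp.symm hjk hpD hjD hlD hkD, hp₁]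
  · rw [rhoDist_comm (g + tj * _),
      ← rhoDist_eq_of_homologyPair hgg hlp.symm hjk.symm hpD hkD hlD hjD, hp₁]

/-- For four points `a, b, c, d` on the unit circle in circular order with
`L[a,b]`, `L[c,d]` not parallel, `p` on the open segment `(b,c)`,
`g = LIS[a,b,c,d]`, `j = LIS[g,p,a,c]`, `k = LIS[g,p,b,d]`, `l = LIS[g,p,a,d]`
(the intersections being single points), and `p, j, k, l` in the unit disk,
one has `ρ(p,j) = ρ(k,l)` and `ρ(p,k) = ρ(j,l)`. -/
theorem rho_equalities_of_config (a b c d g p j k l : ℂ)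
    (hcirc : ∃ ta tb tc td : ℝ,
      ta < tb ∧ tb < tc ∧ tc < td ∧ td < ta + 2 * Real.pi ∧
      a = Complex.exp (ta * Complex.I) ∧ b = Complex.exp (tb * Complex.I) ∧
      c = Complex.exp (tc * Complex.I) ∧ d = Complex.exp (td * Complex.I))
    (hpar : ¬ ∃ s : ℝ, d - c = (s : ℂ) * (b - a))
    (hp : p ∈ openSegment ℝ b c)
    (hg : lineThrough a b ∩ lineThrough c d = {g})
    (hj : lineThrough g p ∩ lineThrough a c = {j})
    (hk : lineThrough g p ∩ lineThrough b d = {k})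
    (hl : lineThrough g p ∩ lineThrough a d = {l})
    (hpD : ‖p‖ < 1) (hjD : ‖j‖ < 1)
    (hkD : ‖k‖ < 1) (hlD : ‖l‖ < 1) :
    rhoDist p j = rhoDist k l ∧ rhoDist p k = rhoDist j l :=
  rho_equalities_of_config_general a b c d g p j k l hcirc hp hg hj hk hl hpD hjD hkD hlD
end

section
/- For all distinct a, b ∈ 𝔹², sinh(h(a,b)/2) = √(1−m²) · sinh(ρ(a,b)/2), where m = d({0}, L[a,b]) is the Euclidean distance from the origin to the line through a and b, h is the Hilbert metric and ρ is the hyperbolic metric of the unit disk. -/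
open Complex ComplexConjugate

/-! Parametrize the line as `a + t (b - a)`. Then `‖a + t (b - a)‖² - 1 = ‖b - a‖² (t - t₁) (t - t₂)`
where `t₁ < 0 < 1 < t₂` are the parameters of the two boundary points, so `h(a,b) = log (X / Y)`
with `X = (1 - t₁) t₂`, `Y = -t₁ (t₂ - 1)`, and `sinh (h/2) = (X - Y) / (2 √(XY))`. Here
`X - Y = t₂ - t₁`, and evaluating the factorization at `t = 0, 1` gives
`XY = (1 - ‖a‖²)(1 - ‖b‖²) / ‖b - a‖⁴`. Completing the square at the midpoint of the chord shows
that `√(1 - m²)` is half the chord length `‖b - a‖ (t₂ - t₁)`; multiplied by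
`sinh (ρ/2) = ‖b - a‖ / √((1 - ‖a‖²)(1 - ‖b‖²))` this gives the same value. -/

noncomputable def linePoint (a b : ℂ) (t : ℝ) : ℂ := a + t * (b - a)

lemma dist_linePoint_left (a b : ℂ) (t : ℝ) : dist (linePoint a b t) a = |t| * ‖b - a‖ := by
  rw [dist_eq_norm, linePoint, add_sub_cancel_left, norm_mul, Complex.norm_real, Real.norm_eq_abs]

lemma dist_linePoint_right (a b : ℂ) (t : ℝ) :
    dist (linePoint a b t) b = |t - 1| * ‖b - a‖ := by
  rw [dist_eq_norm, show linePoint a b t - b = ((t - 1 : ℝ) : ℂ) * (b - a) by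
    push_cast [linePoint]; ring, norm_mul, Complex.norm_real, Real.norm_eq_abs]

lemma dist_linePoint_left_lt_right_iff {a b : ℂ} (hab : a ≠ b) {t : ℝ} :
    dist (linePoint a b t) a < dist (linePoint a b t) b ↔ t < 1 / 2 := by
  rw [dist_linePoint_left, dist_linePoint_right,
    mul_lt_mul_iff_left₀ (norm_pos_iff.2 (sub_ne_zero.2 hab.symm)), ← sq_lt_sq]
  constructor <;> intro h <;> nlinarith

lemma dist_linePoint_right_lt_left_iff {a b : ℂ} (hab : a ≠ b) {t : ℝ} :
    dist (linePoint a b t) b < dist (linePoint a b t) a ↔ 1 / 2 < t := by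
  rw [dist_linePoint_left, dist_linePoint_right,
    mul_lt_mul_iff_left₀ (norm_pos_iff.2 (sub_ne_zero.2 hab.symm)), ← sq_lt_sq]
  constructor <;> intro h <;> nlinarith

lemma sq_norm_linePoint (a b : ℂ) (t : ℝ) :
    ‖linePoint a b t‖ ^ 2 =
      ‖a‖ ^ 2 + 2 * (conj a * (b - a)).re * t + ‖b - a‖ ^ 2 * t ^ 2 := by
  simp only [← Complex.normSq_eq_norm_sq, Complex.normSq_apply, linePoint, Complex.add_re,
    Complex.add_im, Complex.mul_re, Complex.mul_im, Complex.sub_re, Complex.sub_im,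
    Complex.conj_re, Complex.conj_im, Complex.ofReal_re, Complex.ofReal_im]
  ring

lemma exists_sq_norm_linePoint_sub_one_eq {a b : ℂ} (ha : ‖a‖ < 1) (hab : a ≠ b) :
    ∃ t₁ t₂ : ℝ, t₁ < t₂ ∧
      ∀ t : ℝ, ‖linePoint a b t‖ ^ 2 - 1 = ‖b - a‖ ^ 2 * ((t - t₁) * (t - t₂)) := by
  set β := (conj a * (b - a)).re
  have hℓ : 0 < ‖b - a‖ := norm_pos_iff.2 (sub_ne_zero.2 hab.symm)
  have hΔ : 0 < β ^ 2 + ‖b - a‖ ^ 2 * (1 - ‖a‖ ^ 2) := by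
    have : 0 < 1 - ‖a‖ ^ 2 := by nlinarith [norm_nonneg a]
    positivity
  set s := √(β ^ 2 + ‖b - a‖ ^ 2 * (1 - ‖a‖ ^ 2))
  have hs : 0 < s := Real.sqrt_pos.2 hΔ
  have hs2 : s ^ 2 = β ^ 2 + ‖b - a‖ ^ 2 * (1 - ‖a‖ ^ 2) := Real.sq_sqrt hΔ.le
  refine ⟨(-β - s) / ‖b - a‖ ^ 2, (-β + s) / ‖b - a‖ ^ 2, by gcongr; linarith, fun t => ?_⟩
  rw [sq_norm_linePoint]
  field_simp
  linear_combination hs2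

lemma linePoint_mem_lineThrough (a b : ℂ) (t : ℝ) : linePoint a b t ∈ lineThrough a b := ⟨t, rfl⟩

lemma distToLine_eq_norm_linePoint {a b : ℂ} {c : ℝ}
    (hc : ∀ t, ‖linePoint a b c‖ ≤ ‖linePoint a b t‖) :
    distToLine a b = ‖linePoint a b c‖ := by
  apply le_antisymm
  · simpa [distToLine] using
      Metric.infDist_le_dist_of_mem (x := 0) (linePoint_mem_lineThrough a b c)
  · rw [distToLine, Metric.le_infDist ⟨_, linePoint_mem_lineThrough a b c⟩]
    rintro _ ⟨t, rfl⟩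
    simpa [linePoint] using hc t

section Chord

variable {a b : ℂ} {t₁ t₂ : ℝ}
  (hfac : ∀ t : ℝ, ‖linePoint a b t‖ ^ 2 - 1 = ‖b - a‖ ^ 2 * ((t - t₁) * (t - t₂)))
include hfac

lemma norm_linePoint_eq_one_iff (hab : a ≠ b) (t : ℝ) :
    ‖linePoint a b t‖ = 1 ↔ t = t₁ ∨ t = t₂ := by
  have hℓ : ‖b - a‖ ≠ 0 := norm_ne_zero_iff.2 (sub_ne_zero.2 hab.symm)
  rw [← pow_eq_one_iff_of_nonneg (norm_nonneg _) two_ne_zero, ← sub_eq_zero, hfac]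
  simp [hℓ, sub_eq_zero]

lemma sq_norm_left_sub_one : ‖a‖ ^ 2 - 1 = ‖b - a‖ ^ 2 * (t₁ * t₂) := by
  simpa [linePoint] using hfac 0

lemma sq_norm_right_sub_one : ‖b‖ ^ 2 - 1 = ‖b - a‖ ^ 2 * ((1 - t₁) * (1 - t₂)) := by
  simpa [linePoint] using hfac 1

lemma lt_zero_and_one_lt_of_norm_lt_one (ha : ‖a‖ < 1) (hb : ‖b‖ < 1) (h₁₂ : t₁ < t₂) :
    t₁ < 0 ∧ 1 < t₂ := by
  have h0 := sq_norm_left_sub_one hfac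
  have h1 := sq_norm_right_sub_one hfac
  have ha' : ‖a‖ ^ 2 < 1 := by nlinarith [norm_nonneg a]
  have hb' : ‖b‖ ^ 2 < 1 := by nlinarith [norm_nonneg b]
  have hp0 : t₁ * t₂ < 0 := neg_of_mul_neg_right (by linarith) (sq_nonneg _)
  have hp1 : (1 - t₁) * (1 - t₂) < 0 := neg_of_mul_neg_right (by linarith) (sq_nonneg _)
  constructor <;> nlinarith

lemma sqrt_one_sub_distToLine_sq (h₁₂ : t₁ ≤ t₂) :
    √(1 - distToLine a b ^ 2) = ‖b - a‖ * (t₂ - t₁) / 2 := by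
  set c := (t₁ + t₂) / 2
  have hsq : ∀ t, ‖linePoint a b t‖ ^ 2 = ‖linePoint a b c‖ ^ 2 + ‖b - a‖ ^ 2 * (t - c) ^ 2 := by
    intro t
    linear_combination hfac t - hfac c
  have hm : distToLine a b = ‖linePoint a b c‖ := by
    refine distToLine_eq_norm_linePoint fun t => ?_
    rw [← pow_le_pow_iff_left₀ (norm_nonneg _) (norm_nonneg _) two_ne_zero, hsq t]
    nlinarith [sq_nonneg (‖b - a‖ * (t - c))]
  have hm2 : 1 - distToLine a b ^ 2 = (‖b - a‖ * (t₂ - t₁) / 2) ^ 2 := by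
    rw [hm]; linear_combination -hfac c
  have hchord : 0 ≤ ‖b - a‖ * (t₂ - t₁) / 2 :=
    div_nonneg (mul_nonneg (norm_nonneg _) (sub_nonneg.2 h₁₂)) zero_le_two
  rw [hm2, Real.sqrt_sq hchord]

end Chord

lemma crossRatio_linePoint {a b : ℂ} (hab : a ≠ b) {t₁ t₂ : ℝ} (ht₁ : t₁ < 0) (ht₂ : 1 < t₂) :
    dist (linePoint a b t₁) b * dist a (linePoint a b t₂) /
        (dist (linePoint a b t₁) a * dist b (linePoint a b t₂)) =
      (1 - t₁) * t₂ / (-t₁ * (t₂ - 1)) := by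
  have hℓ : ‖b - a‖ ≠ 0 := norm_ne_zero_iff.2 (sub_ne_zero.2 hab.symm)
  rw [dist_comm a, dist_comm b, dist_linePoint_left, dist_linePoint_left, dist_linePoint_right,
    dist_linePoint_right, abs_of_neg ht₁, abs_of_neg (by linarith : t₁ - 1 < 0),
    abs_of_pos (by linarith : 0 < t₂), abs_of_pos (by linarith : 0 < t₂ - 1)]
  field_simp
  ring

lemma hilbertDist_eq_log {a b : ℂ} (hab : a ≠ b) {t₁ t₂ : ℝ} (ht₁ : t₁ < 0) (ht₂ : 1 < t₂)
    (hroots : ∀ t, ‖linePoint a b t‖ = 1 ↔ t = t₁ ∨ t = t₂) :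
    hilbertDist a b = Real.log ((1 - t₁) * t₂ / (-t₁ * (t₂ - 1))) := by
  rw [hilbertDist, ← csSup_singleton (Real.log _)]
  congr 1
  ext d
  constructor
  · rintro ⟨u, v, hu, hv, ⟨s, hs⟩, ⟨r, hr⟩, hsa, hrb, rfl⟩
    obtain rfl : u = linePoint a b s := hs
    obtain rfl : v = linePoint a b r := hr
    rw [dist_linePoint_left_lt_right_iff hab] at hsa
    rw [dist_linePoint_right_lt_left_iff hab] at hrb
    obtain rfl : s = t₁ := ((hroots s).1 hu).resolve_right (by linarith)
    obtain rfl : r = t₂ := ((hroots r).1 hv).resolve_left (by linarith)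
    exact congrArg Real.log (crossRatio_linePoint hab ht₁ ht₂)
  · rintro rfl
    refine ⟨_, _, (hroots t₁).2 (.inl rfl), (hroots t₂).2 (.inr rfl),
      linePoint_mem_lineThrough a b t₁, linePoint_mem_lineThrough a b t₂, ?_, ?_,
      by rw [crossRatio_linePoint hab ht₁ ht₂]⟩
    · rw [dist_linePoint_left_lt_right_iff hab]; linarith
    · rw [dist_linePoint_right_lt_left_iff hab]; linarith

lemma Real.sinh_half_log_div {x y : ℝ} (hx : 0 < x) (hy : 0 < y) :
    Real.sinh (Real.log (x / y) / 2) = (x - y) / (2 * √(x * y)) := by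
  have hpx := Real.sqrt_pos.2 hx
  have hpy := Real.sqrt_pos.2 hy
  have hlog : Real.log (x / y) / 2 = Real.log (√x / √y) := by
    rw [Real.log_div hpx.ne' hpy.ne', Real.log_sqrt hx.le, Real.log_sqrt hy.le,
      Real.log_div hx.ne' hy.ne']
    ring
  rw [hlog, Real.sinh_log (div_pos hpx hpy), Real.sqrt_mul hx.le]
  field_simp
  rw [Real.sq_sqrt hx.le, Real.sq_sqrt hy.le]

lemma sinh_half_rhoDist (a b : ℂ) :
    Real.sinh (rhoDist a b / 2) = ‖a - b‖ / √((1 - ‖a‖ ^ 2) * (1 - ‖b‖ ^ 2)) := by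
  rw [rhoDist, mul_div_cancel_left₀ _ two_ne_zero, Real.sinh_arsinh]

/-- Functional identity between the Hilbert and hyperbolic metrics:
`sinh (h(a,b)/2) = √(1-m²) · sinh (ρ(a,b)/2)` with `m = d({0}, L[a,b])`. -/
theorem hilbert_rho_identity (a b : ℂ)
    (ha : ‖a‖ < 1) (hb : ‖b‖ < 1) (hab : a ≠ b) :
    Real.sinh (hilbertDist a b / 2) =
      Real.sqrt (1 - distToLine a b ^ 2) * Real.sinh (rhoDist a b / 2) := by
  obtain ⟨t₁, t₂, h₁₂, hfac⟩ := exists_sq_norm_linePoint_sub_one_eq ha hab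
  obtain ⟨ht₁, ht₂⟩ := lt_zero_and_one_lt_of_norm_lt_one hfac ha hb h₁₂
  have hℓ : 0 < ‖b - a‖ := norm_pos_iff.2 (sub_ne_zero.2 hab.symm)
  have hvieta : (1 - t₁) * t₂ * (-t₁ * (t₂ - 1)) =
      (1 - ‖a‖ ^ 2) * (1 - ‖b‖ ^ 2) / (‖b - a‖ ^ 2) ^ 2 := by
    field_simp
    linear_combination (1 - ‖b‖ ^ 2) * sq_norm_left_sub_one hfac -
      ‖b - a‖ ^ 2 * (t₁ * t₂) * sq_norm_right_sub_one hfac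
  rw [hilbertDist_eq_log hab ht₁ ht₂ (norm_linePoint_eq_one_iff hfac hab),
    Real.sinh_half_log_div (by nlinarith) (by nlinarith), hvieta,
    Real.sqrt_div' _ (by positivity), Real.sqrt_sq (by positivity),
    sqrt_one_sub_distToLine_sq hfac h₁₂.le, sinh_half_rhoDist, norm_sub_rev]
  field_simp
  ring
end

section
/- Let a, b, c, d be four distinct points on the unit circle ∂𝔹², lying on ∂𝔹² in this circular order, such that the lines L[a,b] and L[c,d] are not parallel. Let p be a point on the open Euclidean segment (b,c), let g = LIS[a,b,c,d], j = LIS[g,p,a,c], k = LIS[g,p,b,d], and l = LIS[g,p,a,d], where each of these pairs of lines intersects in a single point, and assume p, j, k, l ∈ 𝔹². Then h(p,j) = h(k,l) and h(p,k) = h(j,l), where h is the Hilbert metric of the unit disk. -/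
open Complex ComplexConjugate

lemma chord_mem_iff {x y : ℂ} (hx : x * conj x = 1) (hy : y * conj y = 1) (hxy : x ≠ y) (z : ℂ) :
    z ∈ lineThrough x y ↔ z + x * y * conj z = x + y := by
  constructor
  · rintro ⟨t, rfl⟩
    simp only [map_add, map_mul, map_sub, Complex.conj_ofReal]
    linear_combination ((1:ℂ) - (t:ℂ)) * y * hx + (t:ℂ) * x * hy
  · intro h
    have hx0 : x ≠ 0 := by rintro rfl; simp at hx
    have hy0 : y ≠ 0 := by rintro rfl; simp at hy
    have hyx : y - x ≠ 0 := sub_ne_zero.mpr (Ne.symm hxy)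
    have hyx' : conj y - conj x ≠ 0 := by
      intro h0
      exact hyx (sub_eq_zero.mpr (by simpa using congrArg conj (sub_eq_zero.mp h0)))
    set r : ℂ := (z - x) / (y - x) with hr
    have hcr : conj r = r := by
      rw [hr, map_div₀, map_sub, map_sub, div_eq_div_iff hyx' hyx]
      apply mul_left_cancel₀ (mul_ne_zero hx0 hy0)
      linear_combination (y-x)*h + y*(z-y)*hx - x*(z-x)*hy
    have hre : (r.re : ℂ) = r := by
      rw [Complex.conj_eq_iff_re] at hcr; exact hcr
    refine ⟨r.re, ?_⟩
    have : r * (y - x) = z - x := div_mul_cancel₀ _ hyx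
    rw [hre, this]; ring

lemma meet_chords {x y z w : ℂ} (hx : x * conj x = 1) (hyz : y ≠ z)
    (h1 : w + x * y * conj w = x + y) (h2 : w + x * z * conj w = x + z) : w = x := by
  have hx0 : x ≠ 0 := by rintro rfl; simp at hx
  have hyz' : y - z ≠ 0 := sub_ne_zero.mpr hyz
  have h3 : (y - z) * (x * conj w) = (y - z) * (x * conj x) := by
    rw [hx]; linear_combination h1 - h2
  have h4 : conj w = conj x := by
    have := mul_left_cancel₀ hyz' h3
    exact mul_left_cancel₀ hx0 this
  have := congrArg conj h4
  simpa using this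

lemma unit_on_chord {x c d : ℂ} (hx : x * conj x = 1) (h : x + c * d * conj x = c + d) :
    x = c ∨ x = d := by
  have h2 : (x - c) * (x - d) = 0 := by linear_combination x * h - c * d * hx
  rcases mul_eq_zero.mp h2 with h3 | h3
  · exact Or.inl (sub_eq_zero.mp h3)
  · exact Or.inr (sub_eq_zero.mp h3)

lemma exp_ne_exp {s t : ℝ} (h1 : 0 < t - s) (h2 : t - s < 2 * Real.pi) :
    Complex.exp (s * Complex.I) ≠ Complex.exp (t * Complex.I) := by
  intro h
  rw [Complex.exp_eq_exp_iff_exists_int] at h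
  obtain ⟨n, hn⟩ := h
  have hn2 : (s : ℂ) * I = ((t + n * (2 * Real.pi)) : ℝ) * I := by
    push_cast; push_cast at hn; linear_combination hn
  have hn3 : s = t + n * (2 * Real.pi) := by
    have := mul_right_cancel₀ Complex.I_ne_zero hn2
    exact_mod_cast this
  have hpi := Real.pi_pos
  have h4 : (n : ℝ) * (2 * Real.pi) = s - t := by linarith
  rcases lt_trichotomy n 0 with hn0 | hn0 | hn0
  · have : (n : ℝ) ≤ -1 := by exact_mod_cast Int.le_sub_one_of_lt hn0
    nlinarith
  · rw [hn0] at h4; simp at h4; linarith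
  · have : (1 : ℝ) ≤ n := by exact_mod_cast hn0
    nlinarith


lemma unit_mul_conj {x : ℂ} (h : ‖x‖ = 1) : x * conj x = 1 := by
  rw [Complex.mul_conj]
  rw [← Complex.sq_norm, h]
  norm_num

lemma hilbert_eq {x y U V : ℂ} (hU1 : ‖U‖ = 1) (hV1 : ‖V‖ = 1)
    (hUl : U ∈ lineThrough x y) (hVl : V ∈ lineThrough x y)
    (hUx : dist U x < dist U y) (hVy : dist V y < dist V x)
    (huniq : ∀ z, ‖z‖ = 1 → z ∈ lineThrough x y → z = U ∨ z = V) :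
    hilbertDist x y = Real.log ((dist U y * dist x V) / (dist U x * dist y V)) := by
  unfold hilbertDist
  have hset : { d : ℝ | ∃ u v : ℂ, ‖u‖ = 1 ∧ ‖v‖ = 1 ∧
      u ∈ lineThrough x y ∧ v ∈ lineThrough x y ∧
      dist u x < dist u y ∧ dist v y < dist v x ∧
      d = Real.log ((dist u y * dist x v) / (dist u x * dist y v)) }
      = {Real.log ((dist U y * dist x V) / (dist U x * dist y V))} := by
    ext e
    simp only [Set.mem_setOf_eq, Set.mem_singleton_iff]
    constructor
    · rintro ⟨u, v, hu1, hv1, hul, hvl, hux, hvy', he⟩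
      rcases huniq u hu1 hul with rfl | rfl
      · rcases huniq v hv1 hvl with rfl | rfl
        · linarith
        · exact he
      · linarith
    · rintro rfl
      exact ⟨U, V, hU1, hV1, hUl, hVl, hUx, hVy, rfl⟩
  rw [hset, csSup_singleton]

lemma hilbert_on_line (g w : ℂ) (hw : w ≠ 0) (tU tV s t : ℝ)
    (habs : ∀ τ : ℝ, Complex.normSq (g + τ * w) - 1 = Complex.normSq w * (τ - tU) * (τ - tV))
    (hs1 : tU < s) (hs2 : s < tV) (ht1 : tU < t) (ht2 : t < tV) (hst : s ≠ t) :
    hilbertDist (g + s * w) (g + t * w) =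
      |Real.log (((t - tU) * (tV - s)) / ((s - tU) * (tV - t)))| := by
  have hwpos : 0 < ‖w‖ := norm_pos_iff.mpr hw
  have hA : 0 < Complex.normSq w := Complex.normSq_pos.mpr hw
  have habs1 : ∀ τ : ℝ, ‖g + τ * w‖ = 1 ↔ (τ = tU ∨ τ = tV) := by
    intro τ
    have hns : Complex.normSq (g + τ * w) = ‖g + τ * w‖ ^ 2 :=
      Complex.normSq_eq_norm_sq _
    constructor
    · intro h
      have h2 : Complex.normSq w * (τ - tU) * (τ - tV) = 0 := by
        rw [← habs, hns, h]; ring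
      rcases mul_eq_zero.mp h2 with h3 | h3
      · rcases mul_eq_zero.mp h3 with h4 | h4
        · exact absurd h4 (ne_of_gt hA)
        · exact Or.inl (by linarith [sub_eq_zero.mp h4])
      · exact Or.inr (by linarith [sub_eq_zero.mp h3])
    · intro h
      have h2 : Complex.normSq (g + τ * w) = 1 := by
        have := habs τ
        rcases h with rfl | rfl <;> nlinarith [this]
      have h3 : ‖g + τ * w‖ ^ 2 = 1 := by rw [← hns]; exact h2
      have h4 := norm_nonneg (g + τ * w)
      nlinarith
  have hline : lineThrough (g + s * w) (g + t * w) = {ζ : ℂ | ∃ τ : ℝ, ζ = g + τ * w} := by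
    ext ζ
    constructor
    · rintro ⟨r, rfl⟩
      exact ⟨s + r * (t - s), by push_cast; ring⟩
    · rintro ⟨τ, rfl⟩
      refine ⟨(τ - s) / (t - s), ?_⟩
      have hts : (t : ℝ) - s ≠ 0 := sub_ne_zero.mpr (Ne.symm hst)
      have h0 : ((τ - s) / (t - s) : ℝ) * (t - s) = τ - s := div_mul_cancel₀ _ hts
      have h2 : (((τ - s) / (t - s) : ℝ) : ℂ) * ((t : ℂ) - s) = (τ : ℂ) - s := by
        exact_mod_cast h0
      linear_combination (-w) * h2
  have hdist : ∀ σ τ : ℝ, dist (g + σ * w) (g + τ * w) = |σ - τ| * ‖w‖ := by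
    intro σ τ
    rw [Complex.dist_eq]
    have h1 : (g + σ * w) - (g + τ * w) = ((σ - τ : ℝ) : ℂ) * w := by push_cast; ring
    rw [h1, norm_mul, Complex.norm_real, Real.norm_eq_abs]
  have hmemU : ∀ τ : ℝ, g + (τ:ℂ) * w ∈ lineThrough (g + s * w) (g + t * w) := by
    intro τ; rw [hline]; exact ⟨τ, rfl⟩
  have huniq : ∀ z, ‖z‖ = 1 → z ∈ lineThrough (g + s * w) (g + t * w) →
      z = g + (tU:ℂ) * w ∨ z = g + (tV:ℂ) * w := by
    intro z hz1 hzl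
    rw [hline] at hzl
    obtain ⟨τ, rfl⟩ := hzl
    rcases (habs1 τ).mp hz1 with rfl | rfl
    · exact Or.inl rfl
    · exact Or.inr rfl
  rcases lt_or_gt_of_ne hst with hlt | hlt
  · -- s < t : u = U, v = V
    rw [hilbert_eq (x := g + s*w) (y := g + t*w) (U := g + (tU:ℂ)*w) (V := g + (tV:ℂ)*w)
      ((habs1 tU).mpr (Or.inl rfl)) ((habs1 tV).mpr (Or.inr rfl))
      (hmemU tU) (hmemU tV) ?_ ?_ huniq]
    · rw [hdist, hdist, hdist, hdist]
      have e1 : |tU - t| = t - tU := by rw [abs_sub_comm]; exact abs_of_pos (by linarith)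
      have e2 : |s - tV| = tV - s := by rw [abs_sub_comm]; exact abs_of_pos (by linarith)
      have e3 : |tU - s| = s - tU := by rw [abs_sub_comm]; exact abs_of_pos (by linarith)
      have e4 : |t - tV| = tV - t := by rw [abs_sub_comm]; exact abs_of_pos (by linarith)
      rw [e1, e2, e3, e4]
      have hcr : ((t - tU) * ‖w‖ * ((tV - s) * ‖w‖)) /
          ((s - tU) * ‖w‖ * ((tV - t) * ‖w‖)) =
          ((t - tU) * (tV - s)) / ((s - tU) * (tV - t)) := by
        have n1 : (s - tU) ≠ 0 := by linarith
        have n2 : (tV - t) ≠ 0 := by linarith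
        have n3 : ‖w‖ ≠ 0 := ne_of_gt hwpos
        field_simp
      rw [hcr]
      have hge : 1 ≤ ((t - tU) * (tV - s)) / ((s - tU) * (tV - t)) := by
        rw [le_div_iff₀ (by nlinarith)]
        nlinarith
      rw [_root_.abs_of_nonneg (Real.log_nonneg hge)]
    · rw [hdist, hdist]
      have e3 : |tU - s| = s - tU := by rw [abs_sub_comm]; exact abs_of_pos (by linarith)
      have e1 : |tU - t| = t - tU := by rw [abs_sub_comm]; exact abs_of_pos (by linarith)
      rw [e3, e1]
      exact mul_lt_mul_of_pos_right (by linarith) hwpos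
    · rw [hdist, hdist]
      have e4 : |tV - t| = tV - t := abs_of_pos (by linarith)
      have e2 : |tV - s| = tV - s := abs_of_pos (by linarith)
      rw [e4, e2]
      exact mul_lt_mul_of_pos_right (by linarith) hwpos
  · -- t < s : u = V, v = U
    rw [hilbert_eq (x := g + s*w) (y := g + t*w) (U := g + (tV:ℂ)*w) (V := g + (tU:ℂ)*w)
      ((habs1 tV).mpr (Or.inr rfl)) ((habs1 tU).mpr (Or.inl rfl))
      (hmemU tV) (hmemU tU) ?_ ?_ ?_]
    · rw [hdist, hdist, hdist, hdist]
      have e1 : |tV - t| = tV - t := abs_of_pos (by linarith)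
      have e2 : |s - tU| = s - tU := abs_of_pos (by linarith)
      have e3 : |tV - s| = tV - s := abs_of_pos (by linarith)
      have e4 : |t - tU| = t - tU := abs_of_pos (by linarith)
      rw [e1, e2, e3, e4]
      have hcr : ((tV - t) * ‖w‖ * ((s - tU) * ‖w‖)) /
          ((tV - s) * ‖w‖ * ((t - tU) * ‖w‖)) =
          ((tV - t) * (s - tU)) / ((tV - s) * (t - tU)) := by
        have n1 : (tV - s) ≠ 0 := by linarith
        have n2 : (t - tU) ≠ 0 := by linarith
        have n3 : ‖w‖ ≠ 0 := ne_of_gt hwpos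
        field_simp
      rw [hcr]
      have hle : ((t - tU) * (tV - s)) / ((s - tU) * (tV - t)) ≤ 1 := by
        rw [div_le_one (by nlinarith)]
        nlinarith
      have hpos : 0 < ((t - tU) * (tV - s)) / ((s - tU) * (tV - t)) := by
        apply div_pos <;> nlinarith
      rw [_root_.abs_of_nonpos (Real.log_nonpos (le_of_lt hpos) hle), ← Real.log_inv]
      congr 1
      rw [inv_div]
      ring
    · rw [hdist, hdist]
      have e3 : |tV - s| = tV - s := abs_of_pos (by linarith)
      have e1 : |tV - t| = tV - t := abs_of_pos (by linarith)
      rw [e3, e1]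
      exact mul_lt_mul_of_pos_right (by linarith) hwpos
    · rw [hdist, hdist]
      have e4 : |tU - t| = t - tU := by rw [abs_sub_comm]; exact abs_of_pos (by linarith)
      have e2 : |tU - s| = s - tU := by rw [abs_sub_comm]; exact abs_of_pos (by linarith)
      rw [e4, e2]
      exact mul_lt_mul_of_pos_right (by linarith) hwpos
    · intro z h1 h2
      exact (huniq z h1 h2).symm

set_option maxHeartbeats 2000000 in
/-- For four points `a, b, c, d` on the unit circle in circular order with
`L[a,b]`, `L[c,d]` not parallel, `p` on the open segment `(b,c)`,
`g = LIS[a,b,c,d]`, `j = LIS[g,p,a,c]`, `k = LIS[g,p,b,d]`, `l = LIS[g,p,a,d]`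
(the intersections being single points), and `p, j, k, l` in the unit disk,
the corresponding equalities hold for the Hilbert metric h. -/
theorem equalities_of_config_4 (a b c d g p j k l : ℂ)
    (hcirc : ∃ ta tb tc td : ℝ,
      ta < tb ∧ tb < tc ∧ tc < td ∧ td < ta + 2 * Real.pi ∧
      a = Complex.exp (ta * Complex.I) ∧ b = Complex.exp (tb * Complex.I) ∧
      c = Complex.exp (tc * Complex.I) ∧ d = Complex.exp (td * Complex.I))
    (hpar : ¬ ∃ s : ℝ, d - c = (s : ℂ) * (b - a))
    (hp : p ∈ openSegment ℝ b c)
    (hg : lineThrough a b ∩ lineThrough c d = {g})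
    (hj : lineThrough g p ∩ lineThrough a c = {j})
    (hk : lineThrough g p ∩ lineThrough b d = {k})
    (hl : lineThrough g p ∩ lineThrough a d = {l})
    (hpD : ‖p‖ < 1) (hjD : ‖j‖ < 1)
    (hkD : ‖k‖ < 1) (hlD : ‖l‖ < 1) :
    hilbertDist p j = hilbertDist k l ∧ hilbertDist p k = hilbertDist j l := by
  obtain ⟨ta, tb, tc, td, o1, o2, o3, o4, ha, hb, hc, hd⟩ := hcirc
  have hpi := Real.pi_pos
  -- unit circle facts
  have habsa : ‖a‖ = 1 := by rw [ha]; exact Complex.norm_exp_ofReal_mul_I ta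
  have habsb : ‖b‖ = 1 := by rw [hb]; exact Complex.norm_exp_ofReal_mul_I tb
  have habsc : ‖c‖ = 1 := by rw [hc]; exact Complex.norm_exp_ofReal_mul_I tc
  have habsd : ‖d‖ = 1 := by rw [hd]; exact Complex.norm_exp_ofReal_mul_I td
  have ua : a * conj a = 1 := unit_mul_conj habsa
  have ub : b * conj b = 1 := unit_mul_conj habsb
  have uc : c * conj c = 1 := unit_mul_conj habsc
  have ud : d * conj d = 1 := unit_mul_conj habsd
  -- distinctness
  have hab : a ≠ b := by rw [ha, hb]; exact exp_ne_exp (by linarith) (by linarith)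
  have hac : a ≠ c := by rw [ha, hc]; exact exp_ne_exp (by linarith) (by linarith)
  have had : a ≠ d := by rw [ha, hd]; exact exp_ne_exp (by linarith) (by linarith)
  have hbc : b ≠ c := by rw [hb, hc]; exact exp_ne_exp (by linarith) (by linarith)
  have hbd : b ≠ d := by rw [hb, hd]; exact exp_ne_exp (by linarith) (by linarith)
  have hcd : c ≠ d := by rw [hc, hd]; exact exp_ne_exp (by linarith) (by linarith)
  -- chord equations
  have hgmem : g ∈ lineThrough a b ∩ lineThrough c d := by rw [hg]; rfl
  have hgab : g + a * b * conj g = a + b := (chord_mem_iff ua ub hab g).mp hgmem.1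
  have hgcd : g + c * d * conj g = c + d := (chord_mem_iff uc ud hcd g).mp hgmem.2
  have hjmem : j ∈ lineThrough g p ∩ lineThrough a c := by rw [hj]; rfl
  have hkmem : k ∈ lineThrough g p ∩ lineThrough b d := by rw [hk]; rfl
  have hlmem : l ∈ lineThrough g p ∩ lineThrough a d := by rw [hl]; rfl
  have hjac : j + a * c * conj j = a + c := (chord_mem_iff ua uc hac j).mp hjmem.2
  have hkbd : k + b * d * conj k = b + d := (chord_mem_iff ub ud hbd k).mp hkmem.2
  have hlad : l + a * d * conj l = a + d := (chord_mem_iff ua ud had l).mp hlmem.2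
  -- p on line b c
  have hpline : p ∈ lineThrough b c := by
    obtain ⟨x1, y1, hx1, hy1, hxy1, hp'⟩ := hp
    refine ⟨y1, ?_⟩
    rw [← hp']
    simp only [Complex.real_smul]
    have : (x1 : ℂ) = 1 - (y1 : ℂ) := by
      have : x1 = 1 - y1 := by linarith
      exact_mod_cast this
    rw [this]; ring
  have hpbc : p + b * c * conj p = b + c := (chord_mem_iff ub uc hbc p).mp hpline
  -- g ≠ a, g ≠ b
  have hgna : g ≠ a := by
    intro h
    rw [h] at hgcd
    rcases unit_on_chord ua hgcd with h2 | h2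
    · exact hac h2
    · exact had h2
  have hgnb : g ≠ b := by
    intro h
    rw [h] at hgcd
    rcases unit_on_chord ub hgcd with h2 | h2
    · exact hbc h2
    · exact hbd h2
  -- p ≠ g
  have hpg : p ≠ g := by
    intro h
    have h1 : p + b * a * conj p = b + a := by rw [h]; linear_combination hgab
    have h2 : p = b := meet_chords ub hac h1 hpbc
    rw [h2, habsb] at hpD; linarith
  have hw : p - g ≠ 0 := sub_ne_zero.mpr hpg
  -- coordinates on the line
  obtain ⟨tj, htj⟩ := hjmem.1
  obtain ⟨tk, htk⟩ := hkmem.1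
  obtain ⟨tl, htl⟩ := hlmem.1
  obtain ⟨w, hwdef⟩ : ∃ w : ℂ, w = p - g := ⟨_, rfl⟩
  rw [← hwdef] at hw htj htk htl
  have hp1 : p = g + ((1 : ℝ) : ℂ) * w := by rw [hwdef]; push_cast; ring
  obtain ⟨A, hAdef⟩ : ∃ A : ℝ, A = Complex.normSq w := ⟨_, rfl⟩
  obtain ⟨Br, hBrdef⟩ : ∃ Br : ℝ, Br = 2 * (conj g * w).re := ⟨_, rfl⟩
  obtain ⟨C, hCdef⟩ : ∃ C : ℝ, C = Complex.normSq g - 1 := ⟨_, rfl⟩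
  have hApos : 0 < A := by rw [hAdef]; exact Complex.normSq_pos.mpr hw
  have key : ∀ τ : ℝ, Complex.normSq (g + (τ : ℂ) * w) = A * τ ^ 2 + Br * τ + (C + 1) := by
    intro τ
    have e1 : g * conj g = ((Complex.normSq g : ℝ) : ℂ) := Complex.mul_conj g
    have e2 : w * conj w = ((Complex.normSq w : ℝ) : ℂ) := Complex.mul_conj w
    have e3 : conj g * w + conj (conj g * w) = ((2 * (conj g * w).re : ℝ) : ℂ) :=
      Complex.add_conj _
    have e : ((Complex.normSq (g + (τ : ℂ) * w) : ℝ) : ℂ)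
        = ((A * τ ^ 2 + Br * τ + (C + 1) : ℝ) : ℂ) := by
      rw [← Complex.mul_conj]
      simp only [map_add, map_mul, Complex.conj_ofReal, Complex.conj_conj] at e3 ⊢
      push_cast [hAdef, hBrdef, hCdef]
      push_cast at e3
      linear_combination e1 + (τ : ℂ) ^ 2 * e2 + (τ : ℂ) * e3
    exact_mod_cast e
  have hnsp : Complex.normSq p < 1 := by
    have := Complex.sq_norm p
    nlinarith [norm_nonneg p]
  have hABC : A + Br + C < 0 := by
    have hk1 := key 1
    rw [← hp1] at hk1
    nlinarith
  have hroots : ∃ tU tV : ℝ, tU < tV ∧ A * (tU + tV) = -Br ∧ A * (tU * tV) = C := by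
    have hdisc : 0 < Br ^ 2 - 4 * A * C := by nlinarith [sq_nonneg (2 * A + Br)]
    have hsq : Real.sqrt (Br ^ 2 - 4 * A * C) ^ 2 = Br ^ 2 - 4 * A * C :=
      Real.sq_sqrt hdisc.le
    have hsqpos : 0 < Real.sqrt (Br ^ 2 - 4 * A * C) := Real.sqrt_pos.mpr hdisc
    refine ⟨(-Br - Real.sqrt (Br ^ 2 - 4 * A * C)) / (2 * A),
      (-Br + Real.sqrt (Br ^ 2 - 4 * A * C)) / (2 * A), ?_, ?_, ?_⟩
    · rw [div_lt_div_iff₀ (by positivity) (by positivity)]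
      nlinarith
    · field_simp
      ring
    · field_simp
      have hsq' : Real.sqrt (Br ^ 2 - A * 4 * C) ^ 2 = Br ^ 2 - 4 * A * C := by
        rw [show A * 4 * C = 4 * A * C by ring]; exact hsq
      linear_combination -hsq'
  obtain ⟨tU, tV, hUV, hsumA, hprodA⟩ := hroots
  have hfac : ∀ τ : ℝ, Complex.normSq (g + (τ : ℂ) * w) - 1
      = Complex.normSq w * (τ - tU) * (τ - tV) := by
    intro τ
    rw [key τ, ← hAdef]
    linear_combination τ * hsumA - hprodA
  -- location of points strictly between tU and tV
  have hloc : ∀ τ : ℝ, ‖g + (τ : ℂ) * w‖ < 1 → tU < τ ∧ τ < tV := by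
    intro τ hτ
    have h1 : Complex.normSq (g + (τ : ℂ) * w) < 1 := by
      have := Complex.sq_norm (g + (τ : ℂ) * w)
      nlinarith [norm_nonneg (g + (τ : ℂ) * w)]
    have h2 : Complex.normSq w * (τ - tU) * (τ - tV) < 0 := by
      rw [← hfac τ]; linarith
    have hA2 : 0 < Complex.normSq w := Complex.normSq_pos.mpr hw
    constructor
    · by_contra hcon
      push_neg at hcon
      have h3 : 0 ≤ (tU - τ) * (tV - τ) := mul_nonneg (by linarith) (by linarith)
      have h4 : 0 ≤ Complex.normSq w * ((tU - τ) * (tV - τ)) := mul_nonneg hA2.le h3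
      have h5 : Complex.normSq w * (τ - tU) * (τ - tV)
          = Complex.normSq w * ((tU - τ) * (tV - τ)) := by ring
      rw [h5] at h2
      linarith
    · by_contra hcon
      push_neg at hcon
      have h3 : 0 ≤ (τ - tU) * (τ - tV) := mul_nonneg (by linarith) (by linarith)
      have h4 : 0 ≤ Complex.normSq w * ((τ - tU) * (τ - tV)) := mul_nonneg hA2.le h3
      have h5 : Complex.normSq w * (τ - tU) * (τ - tV)
          = Complex.normSq w * ((τ - tU) * (τ - tV)) := by ring
      rw [h5] at h2
      linarith
  have hlocp : tU < 1 ∧ 1 < tV := hloc 1 (by rw [← hp1]; exact hpD)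
  have hlocj : tU < tj ∧ tj < tV := hloc tj (by rw [← htj]; exact hjD)
  have hlock : tU < tk ∧ tk < tV := hloc tk (by rw [← htk]; exact hkD)
  have hlocl : tU < tl ∧ tl < tV := hloc tl (by rw [← htl]; exact hlD)
  -- slopes of the chord linear forms along the line
  obtain ⟨Bac, hBacdef⟩ : ∃ x : ℂ, x = w + a * c * conj w := ⟨_, rfl⟩
  obtain ⟨Bbd, hBbddef⟩ : ∃ x : ℂ, x = w + b * d * conj w := ⟨_, rfl⟩
  obtain ⟨Bbc, hBbcdef⟩ : ∃ x : ℂ, x = w + b * c * conj w := ⟨_, rfl⟩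
  obtain ⟨Bad, hBaddef⟩ : ∃ x : ℂ, x = w + a * d * conj w := ⟨_, rfl⟩
  have hjac2 : (g + (tj : ℂ) * w) + a * c * (conj g + (tj : ℂ) * conj w) = a + c := by
    have : conj j = conj g + (tj : ℂ) * conj w := by
      rw [htj]; simp [map_add, map_mul, Complex.conj_ofReal]
    rw [← this, ← htj]; exact hjac
  have hkbd2 : (g + (tk : ℂ) * w) + b * d * (conj g + (tk : ℂ) * conj w) = b + d := by
    have : conj k = conj g + (tk : ℂ) * conj w := by
      rw [htk]; simp [map_add, map_mul, Complex.conj_ofReal]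
    rw [← this, ← htk]; exact hkbd
  have hlad2 : (g + (tl : ℂ) * w) + a * d * (conj g + (tl : ℂ) * conj w) = a + d := by
    have : conj l = conj g + (tl : ℂ) * conj w := by
      rw [htl]; simp [map_add, map_mul, Complex.conj_ofReal]
    rw [← this, ← htl]; exact hlad
  have hpbc2 : (g + ((1 : ℝ) : ℂ) * w) + b * c * (conj g + ((1 : ℝ) : ℂ) * conj w) = b + c := by
    have : conj p = conj g + ((1 : ℝ) : ℂ) * conj w := by
      rw [hp1]; simp [map_add, map_mul, Complex.conj_ofReal]
    rw [← this, ← hp1]; exact hpbc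
  have Lac : ∀ τ : ℝ, (g + (τ : ℂ) * w) + a * c * conj (g + (τ : ℂ) * w) - (a + c)
      = ((τ : ℂ) - (tj : ℂ)) * Bac := by
    intro τ
    simp only [map_add, map_mul, Complex.conj_ofReal, hBacdef]
    linear_combination hjac2
  have Lbd : ∀ τ : ℝ, (g + (τ : ℂ) * w) + b * d * conj (g + (τ : ℂ) * w) - (b + d)
      = ((τ : ℂ) - (tk : ℂ)) * Bbd := by
    intro τ
    simp only [map_add, map_mul, Complex.conj_ofReal, hBbddef]
    linear_combination hkbd2
  have Lad : ∀ τ : ℝ, (g + (τ : ℂ) * w) + a * d * conj (g + (τ : ℂ) * w) - (a + d)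
      = ((τ : ℂ) - (tl : ℂ)) * Bad := by
    intro τ
    simp only [map_add, map_mul, Complex.conj_ofReal, hBaddef]
    linear_combination hlad2
  have Lbc : ∀ τ : ℝ, (g + (τ : ℂ) * w) + b * c * conj (g + (τ : ℂ) * w) - (b + c)
      = ((τ : ℂ) - ((1 : ℝ) : ℂ)) * Bbc := by
    intro τ
    simp only [map_add, map_mul, Complex.conj_ofReal, hBbcdef]
    linear_combination hpbc2
  -- nonvanishing of the slopes
  have hBac : Bac ≠ 0 := by
    intro h0
    have h1 := Lac 0
    rw [h0, mul_zero] at h1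
    simp only [map_add, map_mul, Complex.conj_ofReal] at h1
    push_cast at h1
    have h2 : g + a * c * conj g = a + c := by linear_combination h1
    exact hgna (meet_chords ua hbc hgab h2)
  have hBbd : Bbd ≠ 0 := by
    intro h0
    have h1 := Lbd 0
    rw [h0, mul_zero] at h1
    simp only [map_add, map_mul, Complex.conj_ofReal] at h1
    push_cast at h1
    have h2 : g + b * d * conj g = b + d := by linear_combination h1
    exact hgnb (meet_chords ub had (by linear_combination hgab) h2)
  have hBad : Bad ≠ 0 := by
    intro h0
    have h1 := Lad 0
    rw [h0, mul_zero] at h1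
    simp only [map_add, map_mul, Complex.conj_ofReal] at h1
    push_cast at h1
    have h2 : g + a * d * conj g = a + d := by linear_combination h1
    exact hgna (meet_chords ua hbd hgab h2)
  have hBbc : Bbc ≠ 0 := by
    intro h0
    have h1 := Lbc 0
    rw [h0, mul_zero] at h1
    simp only [map_add, map_mul, Complex.conj_ofReal] at h1
    push_cast at h1
    have h2 : g + b * c * conj g = b + c := by linear_combination h1
    exact hgnb (meet_chords ub hac (by linear_combination hgab) h2)
  -- distinctness of the parameters
  have hpj : (1 : ℝ) ≠ tj := by
    intro h
    have hpj' : p = j := by rw [hp1, htj, ← h]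
    have h1 : p + c * b * conj p = c + b := by linear_combination hpbc
    have h2 : p + c * a * conj p = c + a := by rw [hpj']; linear_combination hjac
    have h3 : p = c := meet_chords uc (Ne.symm hab) h1 h2
    rw [h3, habsc] at hpD; linarith
  have hpk : (1 : ℝ) ≠ tk := by
    intro h
    have hpk' : p = k := by rw [hp1, htk, ← h]
    have h2 : p + b * d * conj p = b + d := by rw [hpk']; linear_combination hkbd
    have h3 : p = b := meet_chords ub hcd hpbc h2
    rw [h3, habsb] at hpD; linarith
  have hjl : tj ≠ tl := by
    intro h
    have hjl' : j = l := by rw [htj, htl, h]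
    have h2 : j + a * d * conj j = a + d := by rw [hjl']; linear_combination hlad
    have h3 : j = a := meet_chords ua hcd hjac h2
    rw [h3, habsa] at hjD; linarith
  have hkl : tk ≠ tl := by
    intro h
    have hkl' : k = l := by rw [htk, htl, h]
    have h1 : k + d * b * conj k = d + b := by linear_combination hkbd
    have h2 : k + d * a * conj k = d + a := by rw [hkl']; linear_combination hlad
    have h3 : k = d := meet_chords ud (Ne.symm hab) h1 h2
    rw [h3, habsd] at hkD; linarith
  -- the pencil identity evaluated at the circle points
  have star : ∀ z : ℂ,
      (z + a * c * conj z - (a + c)) * (z + b * d * conj z - (b + d))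
      - (z + b * c * conj z - (b + c)) * (z + a * d * conj z - (a + d))
      = (a - b) * (c - d) * (z * conj z - 1) := by
    intro z; ring
  have hcircpt : ∀ τ : ℝ, τ = tU ∨ τ = tV →
      (g + (τ : ℂ) * w) * conj (g + (τ : ℂ) * w) = 1 := by
    intro τ hτ
    have h1 : Complex.normSq (g + (τ : ℂ) * w) = 1 := by
      have := hfac τ
      rcases hτ with rfl | rfl <;> nlinarith [this]
    rw [Complex.mul_conj, h1]; norm_num
  have IU : ((tU : ℂ) - (tj : ℂ)) * Bac * (((tU : ℂ) - (tk : ℂ)) * Bbd)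
      = ((tU : ℂ) - ((1 : ℝ) : ℂ)) * Bbc * (((tU : ℂ) - (tl : ℂ)) * Bad) := by
    have s1 := star (g + (tU : ℂ) * w)
    rw [Lac tU, Lbd tU, Lbc tU, Lad tU, hcircpt tU (Or.inl rfl)] at s1
    linear_combination s1
  have IV : ((tV : ℂ) - (tj : ℂ)) * Bac * (((tV : ℂ) - (tk : ℂ)) * Bbd)
      = ((tV : ℂ) - ((1 : ℝ) : ℂ)) * Bbc * (((tV : ℂ) - (tl : ℂ)) * Bad) := by
    have s1 := star (g + (tV : ℂ) * w)
    rw [Lac tV, Lbd tV, Lbc tV, Lad tV, hcircpt tV (Or.inr rfl)] at s1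
    linear_combination s1
  -- the cross-ratio identity
  have hmul : (Bbc * Bad) * (Bac * Bbd) ≠ 0 :=
    mul_ne_zero (mul_ne_zero hBbc hBad) (mul_ne_zero hBac hBbd)
  have Tc : ((tU : ℂ) - tj) * ((tU : ℂ) - tk) * (((tV : ℂ) - 1) * ((tV : ℂ) - tl))
      = ((tU : ℂ) - 1) * ((tU : ℂ) - tl) * (((tV : ℂ) - tj) * ((tV : ℂ) - tk)) := by
    have h : (((tU : ℂ) - tj) * ((tU : ℂ) - tk) * (((tV : ℂ) - 1) * ((tV : ℂ) - tl)))
        * ((Bbc * Bad) * (Bac * Bbd))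
        = (((tU : ℂ) - 1) * ((tU : ℂ) - tl) * (((tV : ℂ) - tj) * ((tV : ℂ) - tk)))
        * ((Bbc * Bad) * (Bac * Bbd)) := by
      push_cast at IU IV ⊢
      linear_combination (((tV : ℂ) - 1) * ((tV : ℂ) - tl) * (Bbc * Bad)) * IU
        - (((tU : ℂ) - 1) * ((tU : ℂ) - tl) * (Bbc * Bad)) * IV
    exact mul_right_cancel₀ hmul h
  have T : (tU - tj) * (tU - tk) * ((tV - 1) * (tV - tl))
      = (tU - 1) * (tU - tl) * ((tV - tj) * (tV - tk)) := by
    exact_mod_cast Tc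
  -- assemble
  obtain ⟨hU1, hV1⟩ := hlocp
  obtain ⟨hUj, hVj⟩ := hlocj
  obtain ⟨hUk, hVk⟩ := hlock
  obtain ⟨hUl', hVl'⟩ := hlocl
  have e1 := hilbert_on_line g w hw tU tV 1 tj hfac hU1 hV1 hUj hVj hpj
  have e2 := hilbert_on_line g w hw tU tV tk tl hfac hUk hVk hUl' hVl' hkl
  have e3 := hilbert_on_line g w hw tU tV 1 tk hfac hU1 hV1 hUk hVk hpk
  have e4 := hilbert_on_line g w hw tU tV tj tl hfac hUj hVj hUl' hVl' hjl
  rw [← hp1] at e1 e3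
  rw [← htj] at e1 e4
  rw [← htk] at e2 e3
  rw [← htl] at e2 e4
  constructor
  · rw [e1, e2]
    have hXY : ((tj - tU) * (tV - 1)) / ((1 - tU) * (tV - tj))
        = ((tl - tU) * (tV - tk)) / ((tk - tU) * (tV - tl)) := by
      rw [div_eq_div_iff (ne_of_gt (mul_pos (by linarith) (by linarith)))
        (ne_of_gt (mul_pos (by linarith) (by linarith)))]
      linear_combination T
    rw [hXY]
  · rw [e3, e4]
    have hXY : ((tk - tU) * (tV - 1)) / ((1 - tU) * (tV - tk))
        = ((tl - tU) * (tV - tj)) / ((tj - tU) * (tV - tl)) := by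
      rw [div_eq_div_iff (ne_of_gt (mul_pos (by linarith) (by linarith)))
        (ne_of_gt (mul_pos (by linarith) (by linarith)))]
      linear_combination T
    rw [hXY]
end

section
/- Let a, b ∈ 𝔹² with a ≠ b and |a| ≠ |b|, and set t = (−(1−|a|²) + √((1−|a|²)(1−|b|²))) / (|a|² − |b|²) and c = (1−t)a + t·b. Then 0 < t < 1, c ∈ 𝔹², h(a,c) = h(c,b), and moreover ρ(a,c) = ρ(c,b); that is, c is simultaneously the Hilbert midpoint and the hyperbolic midpoint of a and b on the segment [a,b]. -/
/-!
Parametrise the chord through `a` and `b` as `s ↦ a + s (b - a)`. Then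
`1 - |a + s (b - a)|² = |b - a|² (s - s₁) (s₂ - s)`, where `s₁ < s₂` are the parameters of the
endpoints of the chord, so the Hilbert distance of two points of the chord is the logarithm of a
cross-ratio in these parameters. Computing both sides shows that along the chord
`sinh (h/2) = κ sinh (ρ/2)` with `κ = (s₂ - s₁) |b - a| / 2` depending only on the chord; hence the
Hilbert and hyperbolic midpoints coincide. The hyperbolic midpoint is `c`, because `t` is chosen
so that `t √(1 - |b|²) = (1 - t) √(1 - |a|²)`.
-/

open Complex ComplexConjugate

open Real

lemma exists_roots_one_sub_norm_add_smul_sq {E : Type*} [NormedAddCommGroup E]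
    [InnerProductSpace ℝ E] {a w : E} (ha : ‖a‖ < 1) (hw : w ≠ 0) :
    ∃ s₁ s₂ : ℝ, s₁ < s₂ ∧ ∀ s : ℝ, 1 - ‖a + s • w‖ ^ 2 = ‖w‖ ^ 2 * ((s - s₁) * (s₂ - s)) := by
  set p := inner ℝ a w
  have hN : 0 < ‖w‖ ^ 2 := by positivity
  have hα : 0 < 1 - ‖a‖ ^ 2 := by nlinarith [norm_nonneg a]
  set D := p ^ 2 + ‖w‖ ^ 2 * (1 - ‖a‖ ^ 2)
  have hD : D = √D ^ 2 := (sq_sqrt (by positivity)).symm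
  have hpD : |p| < √D := by
    rw [← sqrt_sq_eq_abs]
    exact sqrt_lt_sqrt (sq_nonneg p) (by simp only [D]; linarith [mul_pos hN hα])
  refine ⟨(-p - √D) / ‖w‖ ^ 2, (-p + √D) / ‖w‖ ^ 2, ?_, fun s => ?_⟩
  · exact div_lt_div_of_pos_right (by linarith [abs_nonneg p]) hN
  · rw [norm_add_sq_real, real_inner_smul_right, norm_smul, mul_pow, Real.norm_eq_abs, sq_abs]
    field_simp
    linear_combination hD

lemma Real.neg_add_sqrt_mul_div_sub {α β : ℝ} (hα : 0 ≤ α) (hβ : 0 ≤ β) (hαβ : α ≠ β) :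
    (-α + √(α * β)) / (β - α) = √α / (√α + √β) := by
  have hne : √α ≠ √β := fun h => hαβ (by rw [← sq_sqrt hα, h, sq_sqrt hβ])
  have hsum : √α + √β ≠ 0 := by
    intro h
    exact hne (by linarith [sqrt_nonneg α, sqrt_nonneg β])
  rw [div_eq_div_iff (sub_ne_zero.mpr hαβ.symm) hsum, sqrt_mul hα]
  linear_combination √β * sq_sqrt hα + √α * sq_sqrt hβ

lemma Real.log_div_eq_two_mul_arsinh {P Q : ℝ} (hP : 0 < P) (hQ : 0 < Q) :
    Real.log (P / Q) = 2 * arsinh ((P - Q) / (2 * √(P * Q))) := by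
  have hu : 0 < √P / √Q := by positivity
  have hsinh : sinh (Real.log (√P / √Q)) = (P - Q) / (2 * √(P * Q)) := by
    rw [sinh_log hu, sqrt_mul hP.le]
    field_simp
    rw [sq_sqrt hP.le, sq_sqrt hQ.le]
  have hsq : P / Q = (√P / √Q) ^ 2 := by rw [div_pow, sq_sqrt hP.le, sq_sqrt hQ.le]
  rw [← hsinh, arsinh_sinh, hsq, Real.log_pow]
  norm_num

lemma dist_add_mul_add_mul (a w : ℂ) (x y : ℝ) :
    dist (a + x * w) (a + y * w) = |x - y| * ‖w‖ := by
  rw [dist_eq_norm, show a + x * w - (a + y * w) = ((x - y : ℝ) : ℂ) * w by push_cast; ring,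
    norm_mul, norm_real, Real.norm_eq_abs]

section Chord

variable {a w : ℂ} {s₁ s₂ : ℝ}

lemma lineThrough_add_mul {x y : ℝ} (hxy : x ≠ y) :
    lineThrough (a + x * w) (a + y * w) = Set.range fun s : ℝ => a + s * w := by
  ext z
  constructor
  · rintro ⟨r, rfl⟩
    exact ⟨x + r * (y - x), by push_cast; ring⟩
  · rintro ⟨s, rfl⟩
    refine ⟨(s - x) / (y - x), ?_⟩
    have : (y : ℂ) - x ≠ 0 := sub_ne_zero.mpr (by exact_mod_cast hxy.symm)
    push_cast
    field_simp
    ring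

variable (hw : w ≠ 0) (hq : ∀ s : ℝ, 1 - ‖a + s * w‖ ^ 2 = ‖w‖ ^ 2 * ((s - s₁) * (s₂ - s)))
include hw hq

lemma norm_add_mul_lt_one_iff (h₁₂ : s₁ < s₂) (s : ℝ) :
    ‖a + s * w‖ < 1 ↔ s ∈ Set.Ioo s₁ s₂ := by
  rw [← sq_lt_one_iff₀ (norm_nonneg _), ← sub_pos, hq,
    mul_pos_iff_of_pos_left (by positivity), mul_pos_iff, Set.mem_Ioo]
  constructor
  · rintro (⟨h₁, h₂⟩ | ⟨h₁, h₂⟩) <;> constructor <;> linarith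
  · rintro ⟨h₁, h₂⟩
    exact Or.inl ⟨by linarith, by linarith⟩

lemma norm_add_mul_eq_one_iff (s : ℝ) : ‖a + s * w‖ = 1 ↔ s = s₁ ∨ s = s₂ := by
  rw [← pow_eq_one_iff_of_nonneg (norm_nonneg _) two_ne_zero, ← sub_eq_zero, ← neg_eq_zero,
    neg_sub, hq]
  simp [hw, sub_eq_zero, eq_comm (a := s₂)]

theorem hilbertDist_add_mul {x y : ℝ} (h₁ : s₁ < x) (hxy : x < y) (h₂ : y < s₂) :
    hilbertDist (a + x * w) (a + y * w) =
      Real.log ((y - s₁) * (s₂ - x) / ((x - s₁) * (s₂ - y))) := by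
  have hN : 0 < ‖w‖ := norm_pos_iff.mpr hw
  have hline := lineThrough_add_mul (a := a) (w := w) hxy.ne
  have hdist := dist_add_mul_add_mul a w
  have hcircle := norm_add_mul_eq_one_iff hw hq
  have hval : Real.log (dist (a + s₁ * w) (a + y * w) * dist (a + x * w) (a + s₂ * w) /
      (dist (a + s₁ * w) (a + x * w) * dist (a + y * w) (a + s₂ * w))) =
      Real.log ((y - s₁) * (s₂ - x) / ((x - s₁) * (s₂ - y))) := by
    rw [hdist, hdist, hdist, hdist, abs_of_neg (by linarith), abs_of_neg (by linarith),
      abs_of_neg (by linarith), abs_of_neg (by linarith)]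
    congr 1
    field_simp
    ring
  rw [← hval, hilbertDist]
  refine (congrArg sSup ?_).trans (csSup_singleton _)
  refine Set.eq_singleton_iff_unique_mem.mpr ⟨?_, ?_⟩
  · refine ⟨a + s₁ * w, a + s₂ * w, (hcircle s₁).2 (Or.inl rfl), (hcircle s₂).2 (Or.inr rfl),
      hline ▸ ⟨s₁, rfl⟩, hline ▸ ⟨s₂, rfl⟩, ?_, ?_, rfl⟩
    · rw [hdist, hdist, abs_of_neg (by linarith), abs_of_neg (by linarith)]
      exact mul_lt_mul_of_pos_right (by linarith) hN
    · rw [hdist, hdist, abs_of_pos (by linarith), abs_of_pos (by linarith)]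
      exact mul_lt_mul_of_pos_right (by linarith) hN
  · rintro d ⟨u, v, hu, hv, hul, hvl, hua, hvb, rfl⟩
    rw [hline] at hul hvl
    obtain ⟨s, rfl⟩ := hul
    obtain ⟨s', rfl⟩ := hvl
    rw [hdist, hdist] at hua hvb
    obtain rfl : s = s₁ := by
      rcases (hcircle s).1 hu with hs | rfl
      · exact hs
      rw [abs_of_pos (by linarith), abs_of_pos (by linarith)] at hua
      nlinarith
    obtain rfl : s' = s₂ := by
      rcases (hcircle s').1 hv with rfl | hs'
      · rw [abs_of_neg (by linarith), abs_of_neg (by linarith)] at hvb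
        nlinarith
      exact hs'
    rfl

theorem hilbertDist_add_mul_eq_two_mul_arsinh {x y : ℝ} (h₁ : s₁ < x) (hxy : x < y)
    (h₂ : y < s₂) :
    hilbertDist (a + x * w) (a + y * w) =
      2 * arsinh ((s₂ - s₁) * ‖w‖ / 2 * Real.sinh (rhoDist (a + x * w) (a + y * w) / 2)) := by
  have hN : 0 < ‖w‖ := norm_pos_iff.mpr hw
  rw [hilbertDist_add_mul hw hq h₁ hxy h₂,
    Real.log_div_eq_two_mul_arsinh (by nlinarith) (by nlinarith), rhoDist,
    mul_div_cancel_left₀ _ two_ne_zero, sinh_arsinh, hq, hq, ← dist_eq_norm,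
    dist_add_mul_add_mul, abs_of_neg (by linarith),
    show ‖w‖ ^ 2 * ((x - s₁) * (s₂ - x)) * (‖w‖ ^ 2 * ((y - s₁) * (s₂ - y))) =
      (‖w‖ ^ 2) ^ 2 * ((y - s₁) * (s₂ - x) * ((x - s₁) * (s₂ - y))) by ring,
    sqrt_mul (x := (‖w‖ ^ 2) ^ 2) (by positivity), sqrt_sq (by positivity)]
  congr 2
  field_simp
  ring

end Chord

lemma rhoDist_segment_eq_of_mul_sqrt_eq {a b : ℂ} {t : ℝ} (ha : ‖a‖ < 1) (hb : ‖b‖ < 1)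
    (ht : t * √(1 - ‖b‖ ^ 2) = (1 - t) * √(1 - ‖a‖ ^ 2)) :
    rhoDist a (a + t * (b - a)) = rhoDist (a + t * (b - a)) b := by
  have hα₀ : 0 < 1 - ‖a‖ ^ 2 := by nlinarith [norm_nonneg a]
  have hβ₀ : 0 < 1 - ‖b‖ ^ 2 := by nlinarith [norm_nonneg b]
  have hα := sqrt_pos.2 hα₀
  have hβ := sqrt_pos.2 hβ₀
  have hratio : |t| / √(1 - ‖a‖ ^ 2) = |1 - t| / √(1 - ‖b‖ ^ 2) := by
    have := congrArg abs ht
    rw [abs_mul, abs_mul, abs_of_pos hα, abs_of_pos hβ] at this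
    field_simp
    linarith
  have hac : ‖a - (a + t * (b - a))‖ = |t| * ‖b - a‖ := by
    rw [show a - (a + t * (b - a)) = ((-t : ℝ) : ℂ) * (b - a) by push_cast; ring, norm_mul,
      norm_real, Real.norm_eq_abs, abs_neg]
  have hcb : ‖a + t * (b - a) - b‖ = |1 - t| * ‖b - a‖ := by
    rw [show a + t * (b - a) - b = ((t - 1 : ℝ) : ℂ) * (b - a) by push_cast; ring, norm_mul,
      norm_real, Real.norm_eq_abs, abs_sub_comm]
  rw [rhoDist, rhoDist, hac, hcb, sqrt_mul hα₀.le, sqrt_mul' _ hβ₀.le]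
  congr 2
  calc |t| * ‖b - a‖ / (√(1 - ‖a‖ ^ 2) * √(1 - ‖a + t * (b - a)‖ ^ 2))
      = ‖b - a‖ / √(1 - ‖a + t * (b - a)‖ ^ 2) * (|t| / √(1 - ‖a‖ ^ 2)) := by ring
    _ = ‖b - a‖ / √(1 - ‖a + t * (b - a)‖ ^ 2) * (|1 - t| / √(1 - ‖b‖ ^ 2)) := by rw [hratio]
    _ = |1 - t| * ‖b - a‖ / (√(1 - ‖a + t * (b - a)‖ ^ 2) * √(1 - ‖b‖ ^ 2)) := by ring

theorem hilbert_midpoint_general (a b : ℂ)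
    (ha : ‖a‖ < 1) (hb : ‖b‖ < 1)
    (habs : ‖a‖ ≠ ‖b‖)
    (t : ℝ)
    (htdef : t = (-(1 - ‖a‖ ^ 2) +
        Real.sqrt ((1 - ‖a‖ ^ 2) * (1 - ‖b‖ ^ 2))) /
      (‖a‖ ^ 2 - ‖b‖ ^ 2))
    (c : ℂ) (hcdef : c = ((1 - t : ℝ) : ℂ) * a + (t : ℂ) * b) :
    0 < t ∧ t < 1 ∧ ‖c‖ < 1 ∧
      hilbertDist a c = hilbertDist c b ∧ rhoDist a c = rhoDist c b := by
  have hα₀ : 0 < 1 - ‖a‖ ^ 2 := by nlinarith [norm_nonneg a]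
  have hβ₀ : 0 < 1 - ‖b‖ ^ 2 := by nlinarith [norm_nonneg b]
  have hα := sqrt_pos.2 hα₀
  have hβ := sqrt_pos.2 hβ₀
  have ht : t = √(1 - ‖a‖ ^ 2) / (√(1 - ‖a‖ ^ 2) + √(1 - ‖b‖ ^ 2)) := by
    rw [htdef, show ‖a‖ ^ 2 - ‖b‖ ^ 2 = (1 - ‖b‖ ^ 2) - (1 - ‖a‖ ^ 2) by ring]
    refine Real.neg_add_sqrt_mul_div_sub hα₀.le hβ₀.le fun h => habs ?_
    rw [← sq_eq_sq₀ (norm_nonneg _) (norm_nonneg _)]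
    linarith
  have ht₀ : 0 < t := ht ▸ by positivity
  have ht₁ : t < 1 := by rw [ht, div_lt_one (by positivity)]; linarith
  have hρ := rhoDist_segment_eq_of_mul_sqrt_eq ha hb (t := t) (by rw [ht]; field_simp; ring)
  have hw : b - a ≠ 0 := sub_ne_zero.2 fun h => habs (h ▸ rfl)
  obtain ⟨s₁, s₂, h₁₂, hq⟩ := exists_roots_one_sub_norm_add_smul_sq ha hw
  simp only [Complex.real_smul] at hq
  have hinside := norm_add_mul_lt_one_iff hw hq h₁₂
  have h₀ : (0 : ℝ) ∈ Set.Ioo s₁ s₂ := (hinside 0).1 (by simpa using ha)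
  have h₁ : (1 : ℝ) ∈ Set.Ioo s₁ s₂ := (hinside 1).1 (by simpa using hb)
  obtain rfl : c = a + t * (b - a) := by rw [hcdef]; push_cast; ring
  refine ⟨ht₀, ht₁, (hinside t).2 ⟨by linarith [h₀.1], by linarith [h₁.2]⟩, ?_, hρ⟩
  have hac := hilbertDist_add_mul_eq_two_mul_arsinh hw hq h₀.1 ht₀ (by linarith [h₁.2])
  have hcb := hilbertDist_add_mul_eq_two_mul_arsinh hw hq (by linarith [h₀.1]) ht₁ h₁.2
  simp only [ofReal_zero, zero_mul, add_zero, ofReal_one, one_mul, add_sub_cancel] at hac hcb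
  rw [hac, hcb, hρ]

/-- The Hilbert midpoint: for distinct `a, b ∈ 𝔹²` with `|a| ≠ |b|` and
`t = (-(1-|a|²) + √((1-|a|²)(1-|b|²))) / (|a|² - |b|²)`, the point
`c = (1-t)a + tb` satisfies `0 < t < 1`, `c ∈ 𝔹²`, `h(a,c) = h(c,b)`
and `ρ(a,c) = ρ(c,b)`. -/
theorem hilbert_midpoint (a b : ℂ)
    (ha : ‖a‖ < 1) (hb : ‖b‖ < 1) (hab : a ≠ b)
    (habs : ‖a‖ ≠ ‖b‖)
    (t : ℝ)
    (htdef : t = (-(1 - ‖a‖ ^ 2) +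
        Real.sqrt ((1 - ‖a‖ ^ 2) * (1 - ‖b‖ ^ 2))) /
      (‖a‖ ^ 2 - ‖b‖ ^ 2))
    (c : ℂ) (hcdef : c = ((1 - t : ℝ) : ℂ) * a + (t : ℂ) * b) :
    0 < t ∧ t < 1 ∧ ‖c‖ < 1 ∧
      hilbertDist a c = hilbertDist c b ∧ rhoDist a c = rhoDist c b :=
  hilbert_midpoint_general a b ha hb habs t htdef c hcdef
end
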